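/- arXiv:2007.00844 — 11 statements merged into one kernel-verified Lean document; each statement's English description precedes it below -/
import Mathlib

section
/- Let M_1, ..., M_n be closed affine subspaces of a real Hilbert space H with M := ∩_{i=1}^n M_i nonempty. Then for every x_0 ∈ H, the iterates (P_{M_n} P_{M_{n-1}} ⋯ P_{M_1})^k (x_0) converge (in norm) to P_M(x_0) as k → ∞. -/
open Filter Topology

/-- `P` is the nearest-point projector onto the set `S`. -/
def IsProjOn {H : Type*} [NormedAddCommGroup H] [InnerProductSpace ℝ H]
    (S : Set H) (P : H → H) : Prop :=
  ∀ x, P x ∈ S ∧ ∀ y ∈ S, ‖x - P x‖ ≤ ‖x - y‖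

/-!
Translating by a point `q` of `M` turns each `P_{M_i}` into the orthogonal projection `π_i` onto
the closed subspace `K_i = dir M_i`, so it suffices to study `T = π_n ⋯ π_1`. Each `π_i` satisfies
`‖x - π_i x‖² = ‖x‖² - ‖π_i x‖²`, and a product of `n` such maps satisfies
`‖x - T x‖² ≤ n (‖x‖² - ‖T x‖²)`. Since `‖T^k x‖` decreases, `T^k x - T^(k+1) x → 0`: the powers
`T^k` tend to `0` on the range of `T - 1`, hence on its closure as `‖T‖ ≤ 1`. For a contraction
this closure is the orthogonal complement of `Fix T`, on which `T^k` is the identity, and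
`Fix T = ⋂ K_i`. Hence `T^k x → P_{Fix T} x`.
-/

namespace ContinuousLinearMap

variable {𝕜 E : Type*} [RCLike 𝕜] [NormedAddCommGroup E]

section NormedSpace

variable [NormedSpace 𝕜 E] {S T : E →L[𝕜] E} {a b c : ℝ}

/-- For linear `T` this is `c / (c + 1)`-averagedness; `c = 1` is firm nonexpansiveness. -/
def IsAveraged (c : ℝ) (T : E →L[𝕜] E) : Prop :=
  ∀ x, ‖x - T x‖ ^ 2 ≤ c * (‖x‖ ^ 2 - ‖T x‖ ^ 2)

theorem isAveraged_one : (1 : E →L[𝕜] E).IsAveraged c := fun x => by simp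

theorem IsAveraged.norm_apply_le (hT : T.IsAveraged c) (hc : 0 ≤ c) (x : E) : ‖T x‖ ≤ ‖x‖ := by
  by_contra! hlt
  have hx : ‖x - T x‖ ^ 2 ≤ 0 :=
    (hT x).trans (mul_nonpos_of_nonneg_of_nonpos hc (by nlinarith [norm_nonneg x]))
  rw [sq_nonpos_iff, norm_eq_zero, sub_eq_zero] at hx
  exact hlt.ne (congrArg norm hx)

theorem IsAveraged.lipschitzWith (hT : T.IsAveraged c) (hc : 0 ≤ c) : LipschitzWith 1 T :=
  AddMonoidHomClass.lipschitz_of_bound_nnnorm T 1 fun x => by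
    simpa [← NNReal.coe_le_coe] using hT.norm_apply_le hc x

theorem IsAveraged.mul (hS : S.IsAveraged a) (hT : T.IsAveraged b) (ha : 0 ≤ a) (hb : 0 ≤ b) :
    (S * T).IsAveraged (a + b) := by
  intro x
  change ‖x - S (T x)‖ ^ 2 ≤ (a + b) * (‖x‖ ^ 2 - ‖S (T x)‖ ^ 2)
  set u := ‖x - T x‖
  set v := ‖T x - S (T x)‖
  set A := ‖x‖ ^ 2 - ‖T x‖ ^ 2
  set B := ‖T x‖ ^ 2 - ‖S (T x)‖ ^ 2
  have hA : 0 ≤ A := by nlinarith [hT.norm_apply_le hb x, norm_nonneg (T x)]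
  have hB : 0 ≤ B := by nlinarith [hS.norm_apply_le ha (T x), norm_nonneg (S (T x))]
  -- `2 u v ≤ 2 √(bA · aB) ≤ aA + bB`
  have huv : (2 * (u * v)) ^ 2 ≤ (a * A + b * B) ^ 2 := by
    nlinarith [mul_le_mul (hT x) (hS (T x)) (sq_nonneg v) (mul_nonneg hb hA),
      sq_nonneg (a * A - b * B)]
  have huv' := (pow_le_pow_iff_left₀ (by positivity) (by positivity) two_ne_zero).1 huv
  calc ‖x - S (T x)‖ ^ 2 ≤ (u + v) ^ 2 := by
        gcongr; exact norm_sub_le_norm_sub_add_norm_sub _ _ _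
    _ ≤ (a + b) * (‖x‖ ^ 2 - ‖S (T x)‖ ^ 2) := by nlinarith [hT x, hS (T x)]

theorem IsAveraged.mul_apply_eq_self_iff (hS : S.IsAveraged a) (hT : T.IsAveraged b) (ha : 0 ≤ a)
    (hb : 0 ≤ b) {x : E} : S (T x) = x ↔ S x = x ∧ T x = x := by
  refine ⟨fun h => ?_, fun ⟨hSx, hTx⟩ => by rw [hTx, hSx]⟩
  have hnorm : ‖T x‖ = ‖x‖ :=
    le_antisymm (hT.norm_apply_le hb x) (by simpa [h] using hS.norm_apply_le ha (T x))
  have hTx : T x = x := by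
    have := hT x
    rw [hnorm, sub_self, mul_zero, sq_nonpos_iff, norm_eq_zero, sub_eq_zero] at this
    exact this.symm
  exact ⟨by rwa [hTx] at h, hTx⟩

end NormedSpace

variable [InnerProductSpace 𝕜 E] {T : E →L[𝕜] E} {c : ℝ}

theorem isAveraged_starProjection (K : Submodule 𝕜 E) [K.HasOrthogonalProjection] :
    K.starProjection.IsAveraged 1 := fun x => by
  have := K.norm_sq_eq_add_norm_sq_starProjection x
  rw [K.starProjection_orthogonal_val] at this
  linarith

theorem IsAveraged.tendsto_iterate_sub_iterate_succ (hT : T.IsAveraged c) (hc : 0 ≤ c) (x : E) :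
    Tendsto (fun k => T^[k] x - T^[k + 1] x) atTop (𝓝 0) := by
  set d : ℕ → ℝ := fun k => ‖T^[k] x‖ ^ 2
  have hd : Antitone d := antitone_nat_of_succ_le fun k => by
    simp only [d, Function.iterate_succ_apply']
    gcongr
    exact hT.norm_apply_le hc _
  have hlim : Tendsto d atTop (𝓝 (⨅ k, d k)) :=
    tendsto_atTop_ciInf hd ⟨0, Set.forall_mem_range.2 fun k => by positivity⟩
  have hdiff : Tendsto (fun k => c * (d k - d (k + 1))) atTop (𝓝 0) := by
    simpa using (hlim.sub (hlim.comp (tendsto_add_atTop_nat 1))).const_mul c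
  have hsq : Tendsto (fun k => ‖T^[k] x - T^[k + 1] x‖ ^ 2) atTop (𝓝 0) := by
    refine squeeze_zero (fun k => by positivity) (fun k => ?_) hdiff
    simpa only [d, Function.iterate_succ_apply'] using hT (T^[k] x)
  rw [tendsto_zero_iff_norm_tendsto_zero]
  simpa [Real.sqrt_sq (norm_nonneg _)] using hsq.sqrt

theorem orthogonal_eqLocus_le_topologicalClosure_range [CompleteSpace E]
    (hT : ∀ x, ‖T x‖ ≤ ‖x‖) :
    (T.eqLocus (1 : E →L[𝕜] E))ᗮ ≤ (T - 1).range.topologicalClosure := by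
  rw [← Submodule.orthogonal_orthogonal_eq_closure]
  refine Submodule.orthogonal_le fun x hx => ?_
  have hinner : ∀ y, inner 𝕜 (T y) x = inner 𝕜 y x := by
    simpa [Submodule.mem_orthogonal, inner_sub_left, sub_eq_zero] using hx
  refine eq_of_norm_le_re_inner_eq_norm_sq (𝕜 := 𝕜) ?_ ?_
  · exact hT x
  · simp [hinner]

theorem IsAveraged.tendsto_iterate_starProjection [CompleteSpace E] (hT : T.IsAveraged c)
    (hc : 0 ≤ c) (x : E) :
    Tendsto (fun k => T^[k] x) atTop (𝓝 ((T.eqLocus (1 : E →L[𝕜] E)).starProjection x)) := by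
  set F := T.eqLocus (1 : E →L[𝕜] E)
  have hfix : ∀ k, T^[k] (F.starProjection x) = F.starProjection x := fun k =>
    Function.iterate_fixed (F.starProjection_apply_mem x) k
  suffices Tendsto (fun k => T^[k] (x - F.starProjection x)) atTop (𝓝 0) by
    refine (zero_add (F.starProjection x) ▸ this.add_const (F.starProjection x)).congr fun k => ?_
    rw [iterate_map_sub, hfix, sub_add_cancel]
  have hclosed : IsClosed {y | Tendsto (fun k => T^[k] y) atTop (𝓝 0)} :=
    Equicontinuous.isClosed_setOfPred_tendsto (LipschitzWith.uniformEquicontinuous _ 1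
      fun k => by simpa using (hT.lipschitzWith hc).iterate k).equicontinuous
      continuous_const
  have hrange : ∀ z, Tendsto (fun k => T^[k] ((T - 1) z)) atTop (𝓝 0) := fun z => by
    simpa [iterate_map_sub, ← Function.iterate_succ_apply' T] using
      (hT.tendsto_iterate_sub_iterate_succ hc z).neg
  refine closure_minimal (Set.forall_mem_range.2 hrange) hclosed ?_
  have := orthogonal_eqLocus_le_topologicalClosure_range (hT.norm_apply_le hc)
    (F.sub_starProjection_mem_orthogonal x)
  rwa [← SetLike.mem_coe, Submodule.topologicalClosure_coe, LinearMap.coe_range] at this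

variable (K : ℕ → Submodule 𝕜 E) [∀ i, (K i).HasOrthogonalProjection]

noncomputable def cyclicProjection : ℕ → E →L[𝕜] E
  | 0 => 1
  | i + 1 => (K (i + 1)).starProjection * cyclicProjection i

theorem isAveraged_cyclicProjection (i : ℕ) : (cyclicProjection K i).IsAveraged i := by
  induction i with
  | zero => exact isAveraged_one
  | succ i ih =>
    rw [Nat.cast_succ, add_comm]
    exact (isAveraged_starProjection _).mul ih zero_le_one i.cast_nonneg

theorem cyclicProjection_apply_eq_self_iff {i : ℕ} {x : E} :
    cyclicProjection K i x = x ↔ ∀ j ∈ Finset.Icc 1 i, x ∈ K j := by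
  induction i with
  | zero => simp [cyclicProjection]
  | succ i ih =>
    rw [cyclicProjection, mul_def, comp_apply, (isAveraged_starProjection _).mul_apply_eq_self_iff
      (isAveraged_cyclicProjection K i) zero_le_one i.cast_nonneg,
      Submodule.starProjection_eq_self_iff, ih,
      ← Finset.insert_Icc_right_eq_Icc_add_one (Nat.le_add_left 1 i), Finset.forall_mem_insert,
      and_comm]

theorem coe_eqLocus_cyclicProjection (n : ℕ) :
    ((cyclicProjection K n).eqLocus (1 : E →L[𝕜] E) : Set E) =
      ⋂ i ∈ Finset.Icc 1 n, (K i : Set E) := by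
  ext x
  simp only [SetLike.mem_coe, LinearMap.mem_eqLocus, coe_coe, one_apply_eq_self, Set.mem_iInter₂,
    cyclicProjection_apply_eq_self_iff]

end ContinuousLinearMap

open ContinuousLinearMap

section IsProjOn

variable {E : Type*} [NormedAddCommGroup E] [InnerProductSpace ℝ E]

theorem IsProjOn.preimage_add {S : Set E} {P : E → E} (h : IsProjOn S P) (q : E) :
    IsProjOn ((· + q) ⁻¹' S) (fun v => P (v + q) - q) := fun x => by
  refine ⟨by simpa using (h (x + q)).1, fun y hy => ?_⟩
  simpa [sub_sub_eq_add_sub, add_sub_add_right_eq_sub] using (h (x + q)).2 _ hy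

theorem IsProjOn.eq_starProjection {K : Submodule ℝ E} [K.HasOrthogonalProjection] {P : E → E}
    (h : IsProjOn K P) : P = K.starProjection := funext fun x => by
  set p := K.starProjection x
  have hpyth : ‖x - P x‖ ^ 2 = ‖x - p‖ ^ 2 + ‖p - P x‖ ^ 2 := by
    have horth : inner ℝ (x - p) (p - P x) = 0 :=
      K.starProjection_inner_eq_zero x _ (K.sub_mem (K.starProjection_apply_mem x) (h x).1)
    rw [← sub_add_sub_cancel x p (P x), norm_add_sq_real, horth, mul_zero, add_zero]
  have hle := (h x).2 p (K.starProjection_apply_mem x)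
  have : ‖p - P x‖ ^ 2 ≤ 0 := by nlinarith [norm_nonneg (x - P x), norm_nonneg (x - p)]
  rw [sq_nonpos_iff, norm_eq_zero, sub_eq_zero] at this
  exact this.symm

theorem IsProjOn.apply_add_eq_starProjection_add {S : Set E} {P : E → E} {K : Submodule ℝ E}
    [K.HasOrthogonalProjection] {q : E} (h : IsProjOn S P) (hK : (K : Set E) = (· + q) ⁻¹' S)
    (v : E) : P (v + q) = K.starProjection v + q := by
  have hK' : IsProjOn (K : Set E) fun v => P (v + q) - q := hK ▸ h.preimage_add q
  rw [← congrFun hK'.eq_starProjection v, sub_add_cancel]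

theorem AffineSubspace.preimage_add_eq_direction {s : AffineSubspace ℝ E} {q : E} (hq : q ∈ s) :
    (· + q) ⁻¹' (s : Set E) = s.direction := Set.ext fun v => s.vadd_mem_iff_mem_direction v hq

end IsProjOn

theorem cyclic_projections_converge_general
    {H : Type*} [NormedAddCommGroup H] [InnerProductSpace ℝ H] [CompleteSpace H]
    (n : ℕ)
    (M : ℕ → AffineSubspace ℝ H)
    (hclosed : ∀ i ∈ Finset.Icc 1 n, IsClosed (M i : Set H))
    (hne : (⋂ i ∈ Finset.Icc 1 n, (M i : Set H)).Nonempty)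
    (P : ℕ → H → H)
    (hP : ∀ i ∈ Finset.Icc 1 n, IsProjOn (M i : Set H) (P i))
    (PM : H → H)
    (hPM : IsProjOn (⋂ i ∈ Finset.Icc 1 n, (M i : Set H)) PM)
    (Q : ℕ → H → H)
    (hQ0 : Q 0 = id)
    (hQ : ∀ i, 1 ≤ i → i ≤ n → Q i = P i ∘ Q (i - 1))
    (x0 : H) :
    Tendsto (fun k => (Q n)^[k] x0) atTop (𝓝 (PM x0)) := by
  obtain ⟨q, hq⟩ := hne
  have hqM : ∀ i ∈ Finset.Icc 1 n, q ∈ M i := Set.mem_iInter₂.1 hq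
  -- the closure makes every `K i` complete; for `i ∈ Icc 1 n` it changes nothing
  set K : ℕ → Submodule ℝ H := fun i => (M i).direction.topologicalClosure
  have hK : ∀ i ∈ Finset.Icc 1 n, (K i : Set H) = (· + q) ⁻¹' (M i : Set H) := fun i hi => by
    rw [(M i).preimage_add_eq_direction (hqM i hi), show K i = (M i).direction from
      IsClosed.submodule_topologicalClosure_eq ((M i).isClosed_direction_iff.2 (hclosed i hi))]
  set T := cyclicProjection K n
  have hQK : ∀ i ≤ n, ∀ v, Q i (v + q) = cyclicProjection K i v + q := by
    intro i hi v
    induction i with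
    | zero => simp [hQ0, cyclicProjection]
    | succ i ih =>
      have hi' : i + 1 ∈ Finset.Icc 1 n := Finset.mem_Icc.2 ⟨by omega, hi⟩
      rw [hQ (i + 1) (by omega) hi, Function.comp_apply, Nat.add_sub_cancel, ih (by omega),
        (hP _ hi').apply_add_eq_starProjection_add (hK _ hi')]
      rfl
  have hfix : (T.eqLocus (1 : H →L[ℝ] H) : Set H) =
      (· + q) ⁻¹' ⋂ i ∈ Finset.Icc 1 n, (M i : Set H) := by
    rw [coe_eqLocus_cyclicProjection, Set.preimage_iInter₂]
    exact Set.iInter₂_congr hK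
  have hiter : ∀ k v, (Q n)^[k] (v + q) = T^[k] v + q := fun k v =>
    (Function.Semiconj.iterate_right (f := (· + q)) (fun v => (hQK n le_rfl v).symm) k v).symm
  rw [← sub_add_cancel x0 q, hPM.apply_add_eq_starProjection_add hfix]
  simp only [hiter]
  exact ((isAveraged_cyclicProjection K n).tendsto_iterate_starProjection n.cast_nonneg
    (x0 - q)).add_const q

/-- The method of cyclic projections for affine subspaces: the iterates
`(P_{M_n} ⋯ P_{M_1})^k x₀` converge in norm to `P_M x₀` where `M = ∩ᵢ Mᵢ`. -/
theorem cyclic_projections_converge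
    {H : Type*} [NormedAddCommGroup H] [InnerProductSpace ℝ H] [CompleteSpace H]
    (n : ℕ) (hn : 1 ≤ n)
    (M : ℕ → AffineSubspace ℝ H)
    (hclosed : ∀ i ∈ Finset.Icc 1 n, IsClosed (M i : Set H))
    (hne : (⋂ i ∈ Finset.Icc 1 n, (M i : Set H)).Nonempty)
    (P : ℕ → H → H)
    (hP : ∀ i ∈ Finset.Icc 1 n, IsProjOn (M i : Set H) (P i))
    (PM : H → H)
    (hPM : IsProjOn (⋂ i ∈ Finset.Icc 1 n, (M i : Set H)) PM)
    (Q : ℕ → H → H)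
    (hQ0 : Q 0 = id)
    (hQ : ∀ i, 1 ≤ i → i ≤ n → Q i = P i ∘ Q (i - 1))
    (x0 : H) :
    Tendsto (fun k => (Q n)^[k] x0) atTop (𝓝 (PM x0)) :=
  cyclic_projections_converge_general n M hclosed hne P hP PM hPM Q hQ0 hQ x0
end

section
/- Let M_1, ..., M_n be closed affine subspaces of a real Hilbert space H with M := ∩_{i=1}^n M_i nonempty, let Q := P_{M_n} ⋯ P_{M_1}, and let x_0 ∈ H. Then for every x ∈ H and every m ∈ M, ⟨x − Q(x), P_M(x_0)⟩ = ⟨x − Q(x), m⟩. -/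
/-! Each residual `x - P_{Mᵢ} y` is orthogonal to the direction of `Mᵢ`, and `x - Q x` telescopes
into such residuals, so it is orthogonal to the direction of `M`; both `P_M x₀` and `m` lie in `M`,
so their difference lies in that direction. -/

open RealInnerProductSpace

section

variable {H : Type*} [NormedAddCommGroup H] [InnerProductSpace ℝ H]

theorem IsProjOn.inner_sub_eq_zero {S : AffineSubspace ℝ H} {P : H → H}
    (hP : IsProjOn (S : Set H) P) (u : H) {w : H} (hw : w ∈ S.direction) :
    ⟪u - P u, w⟫ = 0 := by
  obtain ⟨hPu, hmin⟩ := hP u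
  have hinf : ‖u - P u - 0‖ = ⨅ v : (S.direction : Set H), ‖u - P u - v‖ := by
    refine le_antisymm (le_ciInf fun v => ?_) ?_
    · simpa [sub_sub, add_comm] using hmin _ (AffineSubspace.vadd_mem_of_mem_direction v.2 hPu)
    · have h0 : (0 : H) ∈ (S.direction : Set H) := S.direction.zero_mem
      simpa using ciInf_le (f := fun v : (S.direction : Set H) => ‖u - P u - v‖)
        ⟨0, by rintro _ ⟨v, rfl⟩; positivity⟩ ⟨0, h0⟩
  simpa using (S.direction.norm_eq_iInf_iff_real_inner_eq_zero S.direction.zero_mem).1 hinf w hw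

theorem inner_sub_iterate_proj_eq_zero (M : ℕ → AffineSubspace ℝ H) (P Q : ℕ → H → H)
    (k : ℕ) (hP : ∀ i ∈ Finset.Icc 1 k, IsProjOn (M i : Set H) (P i)) (hQ0 : Q 0 = id)
    (hQ : ∀ i, 1 ≤ i → i ≤ k → Q i = P i ∘ Q (i - 1))
    {d : H} (hd : ∀ i ∈ Finset.Icc 1 k, d ∈ (M i).direction) (x : H) :
    ⟪x - Q k x, d⟫ = 0 := by
  induction k with
  | zero => simp [hQ0]
  | succ k ih =>
    have hk : k + 1 ∈ Finset.Icc 1 (k + 1) := by simp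
    have hsplit : x - Q (k + 1) x = (x - Q k x) + (Q k x - P (k + 1) (Q k x)) := by
      rw [hQ (k + 1) le_add_self le_rfl, Function.comp_apply, add_tsub_cancel_right]; abel
    rw [hsplit, inner_add_left, (hP _ hk).inner_sub_eq_zero _ (hd _ hk), add_zero]
    exact ih (fun i hi => hP i (Finset.Icc_subset_Icc_right k.le_succ hi))
      (fun i h1 h2 => hQ i h1 (h2.trans k.le_succ))
      (fun i hi => hd i (Finset.Icc_subset_Icc_right k.le_succ hi))

end

theorem cyclic_projections_inner_eq_affine_general
    {H : Type*} [NormedAddCommGroup H] [InnerProductSpace ℝ H]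
    (n : ℕ)
    (M : ℕ → AffineSubspace ℝ H)
    (P : ℕ → H → H)
    (hP : ∀ i ∈ Finset.Icc 1 n, IsProjOn (M i : Set H) (P i))
    (PM : H → H)
    (hPM : IsProjOn (⋂ i ∈ Finset.Icc 1 n, (M i : Set H)) PM)
    (Q : ℕ → H → H)
    (hQ0 : Q 0 = id)
    (hQ : ∀ i, 1 ≤ i → i ≤ n → Q i = P i ∘ Q (i - 1))
    (x0 : H) (x : H) (m : H) (hm : m ∈ ⋂ i ∈ Finset.Icc 1 n, (M i : Set H)) :
    ⟪x - Q n x, PM x0⟫ = ⟪x - Q n x, m⟫ := by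
  have hdir : ∀ i ∈ Finset.Icc 1 n, PM x0 - m ∈ (M i).direction := fun i hi =>
    AffineSubspace.vsub_mem_direction (Set.mem_iInter₂.1 (hPM x0).1 i hi) (Set.mem_iInter₂.1 hm i hi)
  rw [← sub_eq_zero, ← inner_sub_right]
  exact inner_sub_iterate_proj_eq_zero M P Q n hP hQ0 hQ hdir x

/-- For closed affine subspaces `M₁, …, Mₙ` with `Q = P_{Mₙ} ⋯ P_{M₁}` and
`M = ∩ᵢ Mᵢ ≠ ∅`, one has `⟨x − Q x, P_M x₀⟩ = ⟨x − Q x, m⟩` for all `x ∈ H` and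
`m ∈ M`. -/
theorem cyclic_projections_inner_eq_affine
    {H : Type*} [NormedAddCommGroup H] [InnerProductSpace ℝ H] [CompleteSpace H]
    (n : ℕ) (hn : 1 ≤ n)
    (M : ℕ → AffineSubspace ℝ H)
    (hclosed : ∀ i ∈ Finset.Icc 1 n, IsClosed (M i : Set H))
    (hne : (⋂ i ∈ Finset.Icc 1 n, (M i : Set H)).Nonempty)
    (P : ℕ → H → H)
    (hP : ∀ i ∈ Finset.Icc 1 n, IsProjOn (M i : Set H) (P i))
    (PM : H → H)
    (hPM : IsProjOn (⋂ i ∈ Finset.Icc 1 n, (M i : Set H)) PM)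
    (Q : ℕ → H → H)
    (hQ0 : Q 0 = id)
    (hQ : ∀ i, 1 ≤ i → i ≤ n → Q i = P i ∘ Q (i - 1))
    (x0 : H) (x : H) (m : H) (hm : m ∈ ⋂ i ∈ Finset.Icc 1 n, (M i : Set H)) :
    ⟪x - Q n x, PM x0⟫ = ⟪x - Q n x, m⟫ :=
  cyclic_projections_inner_eq_affine_general n M P hP PM hPM Q hQ0 hQ x0 x m hm
end

section
/- Let M_1, ..., M_n be closed affine subspaces of a real Hilbert space H with M := ∩_{i=1}^n M_i nonempty. Let Q := P_{M_n} ⋯ P_{M_1}, Q_i := P_{M_i} ⋯ P_{M_1} for i ∈ {1,...,n}, and Q_0 := I. Fix x_0 ∈ H and x_k ∈ H with Q(x_k) ≠ x_k. Then the unique minimiser over t ∈ ℝ of ‖x_k + t(Q(x_k) − x_k) − P_M(x_0)‖² is t_k = 1/2 + (Σ_{i=1}^n ‖Q_{i−1}(x_k) − Q_i(x_k)‖²) / (2‖x_k − Q(x_k)‖²). -/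
/-!
Write `m = P_M x₀` and `aᵢ = Qᵢ xₖ`. Since `m` lies in every `Mᵢ` and projections onto affine
subspaces are orthogonal, each step `aᵢ₋₁ ↦ aᵢ` is a right angle at `aᵢ` seen from `m`, so by
Pythagoras `‖xₖ - m‖² = ‖Q xₖ - m‖² + Σᵢ ‖aᵢ₋₁ - aᵢ‖²`. Expanding `‖Q xₖ - m‖²` along
`d = Q xₖ - xₖ` turns this into `⟪xₖ + tₖ d - m, d⟫ = 0`, so `tₖ` is the foot of the perpendicular
from `m` to the line `xₖ + ℝ d`, and `‖xₖ + t d - m‖² = ‖xₖ + tₖ d - m‖² + (t - tₖ)² ‖d‖²`.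
-/

open RealInnerProductSpace

section

variable {H : Type*} [NormedAddCommGroup H] [InnerProductSpace ℝ H]

theorem IsProjOn.inner_sub_le_zero {S : Set H} (hS : Convex ℝ S) {P : H → H}
    (hP : IsProjOn S P) (x : H) {y : H} (hy : y ∈ S) : ⟪x - P x, y - P x⟫ ≤ 0 := by
  obtain ⟨hPx, hmin⟩ := hP x
  have : Nonempty S := ⟨⟨P x, hPx⟩⟩
  have hinf : ‖x - P x‖ = ⨅ w : S, ‖x - w‖ :=
    le_antisymm (le_ciInf fun w => hmin w w.2)
      (ciInf_le (f := fun w : S => ‖x - w‖)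
        ⟨0, Set.forall_mem_range.2 fun _ => norm_nonneg _⟩ ⟨P x, hPx⟩)
  exact (norm_eq_iInf_iff_real_inner_le_zero hS hPx).1 hinf y hy

/-- Apply the convex variational inequality to `y` and to its reflection `2 P x - y ∈ M`. -/
theorem IsProjOn.inner_sub_eq_zero_s6 {M : AffineSubspace ℝ H} {P : H → H}
    (hP : IsProjOn (M : Set H) P) (x : H) {y : H} (hy : y ∈ M) : ⟪x - P x, y - P x⟫ = 0 := by
  have hPx := (hP x).1
  have hrefl : (-1 : ℝ) • (y - P x) + P x ∈ M := M.smul_vsub_vadd_mem (-1) hy hPx hPx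
  have h := hP.inner_sub_le_zero M.convex x hrefl
  rw [add_sub_cancel_right, inner_smul_right] at h
  linarith [hP.inner_sub_le_zero M.convex x hy]

theorem norm_sub_sq_eq_add_of_inner_eq_zero {a b m : H} (h : ⟪a - b, m - b⟫ = 0) :
    ‖a - m‖ ^ 2 = ‖b - m‖ ^ 2 + ‖a - b‖ ^ 2 := by
  have hab : ⟪a - b, b - m⟫ = 0 := by rw [← neg_sub m b, inner_neg_right, h, neg_zero]
  rw [← sub_add_sub_cancel a b m, norm_add_sq_real, hab]
  ring

theorem norm_sub_sq_eq_add_sum_of_inner_eq_zero (a : ℕ → H) (m : H) (n : ℕ)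
    (h : ∀ i ∈ Finset.Icc 1 n, ⟪a (i - 1) - a i, m - a i⟫ = 0) :
    ‖a 0 - m‖ ^ 2 = ‖a n - m‖ ^ 2 + ∑ i ∈ Finset.Icc 1 n, ‖a (i - 1) - a i‖ ^ 2 := by
  induction n with
  | zero => simp
  | succ n ih =>
    have hstep := norm_sub_sq_eq_add_of_inner_eq_zero (h (n + 1) (by simp))
    rw [Finset.sum_Icc_succ_top (by omega), ih fun i hi => h i (Finset.Icc_subset_Icc_right
      n.le_succ hi)]
    simp only [add_tsub_cancel_right] at hstep ⊢
    linarith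

theorem norm_add_smul_sq_eq_of_inner_eq_zero {u d : H} {t₀ : ℝ} (h : ⟪u + t₀ • d, d⟫ = 0)
    (t : ℝ) : ‖u + t • d‖ ^ 2 = ‖u + t₀ • d‖ ^ 2 + (t - t₀) ^ 2 * ‖d‖ ^ 2 := by
  have hsplit : u + t • d = (u + t₀ • d) + (t - t₀) • d := by rw [sub_smul]; abel
  rw [hsplit, norm_add_sq_real, inner_smul_right, h, norm_smul, Real.norm_eq_abs, mul_pow,
    sq_abs]
  ring

theorem forall_norm_add_smul_sq_le_iff {u d : H} (hd : d ≠ 0) {t₀ : ℝ}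
    (h : ⟪u + t₀ • d, d⟫ = 0) (t : ℝ) :
    (∀ s : ℝ, ‖u + t • d‖ ^ 2 ≤ ‖u + s • d‖ ^ 2) ↔ t = t₀ := by
  have hdpos : 0 < ‖d‖ ^ 2 := by positivity
  have hexpand := norm_add_smul_sq_eq_of_inner_eq_zero h
  constructor
  · intro hle
    have hgap := hle t₀
    rw [hexpand t] at hgap
    have hsq : (t - t₀) ^ 2 * ‖d‖ ^ 2 = 0 := le_antisymm (by linarith) (by positivity)
    exact sub_eq_zero.1 (pow_eq_zero_iff two_ne_zero |>.1
      ((mul_eq_zero.1 hsq).resolve_right hdpos.ne'))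
  · rintro rfl s
    rw [hexpand s]
    exact le_add_of_nonneg_right (by positivity)

end

theorem gearhart_koshy_step_affine_general
    {H : Type*} [NormedAddCommGroup H] [InnerProductSpace ℝ H]
    (n : ℕ)
    (M : ℕ → AffineSubspace ℝ H)
    (P : ℕ → H → H)
    (hP : ∀ i ∈ Finset.Icc 1 n, IsProjOn (M i : Set H) (P i))
    (PM : H → H)
    (hPM : IsProjOn (⋂ i ∈ Finset.Icc 1 n, (M i : Set H)) PM)
    (Q : ℕ → H → H)
    (hQ0 : Q 0 = id)
    (hQ : ∀ i, 1 ≤ i → i ≤ n → Q i = P i ∘ Q (i - 1))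
    (x0 xk : H) (hxk : Q n xk ≠ xk)
    (tk : ℝ)
    (htk : tk = 1 / 2 + (∑ i ∈ Finset.Icc 1 n, ‖Q (i - 1) xk - Q i xk‖ ^ 2)
      / (2 * ‖xk - Q n xk‖ ^ 2)) :
    (∀ t : ℝ, ‖xk + tk • (Q n xk - xk) - PM x0‖ ^ 2
        ≤ ‖xk + t • (Q n xk - xk) - PM x0‖ ^ 2) ∧
    (∀ t : ℝ, (∀ s : ℝ, ‖xk + t • (Q n xk - xk) - PM x0‖ ^ 2
        ≤ ‖xk + s • (Q n xk - xk) - PM x0‖ ^ 2) → t = tk) := by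
  set m := PM x0
  set d := Q n xk - xk
  have hd : d ≠ 0 := sub_ne_zero.mpr hxk
  have horth : ∀ i ∈ Finset.Icc 1 n, ⟪Q (i - 1) xk - Q i xk, m - Q i xk⟫ = 0 := fun i hi => by
    obtain ⟨hi1, hin⟩ := Finset.mem_Icc.mp hi
    rw [hQ i hi1 hin]
    exact (hP i hi).inner_sub_eq_zero_s6 _ (Set.mem_iInter₂.mp (hPM x0).1 i hi)
  have hpyth := norm_sub_sq_eq_add_sum_of_inner_eq_zero (Q · xk) m n horth
  have htk' : tk = 1 / 2 + (∑ i ∈ Finset.Icc 1 n, ‖Q (i - 1) xk - Q i xk‖ ^ 2)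
      / (2 * ‖d‖ ^ 2) := by rw [htk, norm_sub_rev]
  have hfoot : ⟪xk - m + tk • d, d⟫ = 0 := by
    have hexpand : Q n xk - m = (xk - m) + d := by rw [add_comm, sub_add_sub_cancel]
    rw [hQ0, id, hexpand, norm_add_sq_real] at hpyth
    rw [inner_add_left, real_inner_smul_left, real_inner_self_eq_norm_sq, htk']
    field_simp
    linarith
  simp_rw [add_sub_right_comm xk _ m]
  exact ⟨fun t => ((forall_norm_add_smul_sq_le_iff hd hfoot tk).2 rfl) t,
    fun t => (forall_norm_add_smul_sq_le_iff hd hfoot t).1⟩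

/-- The Gearhart–Koshy step size for affine subspaces: if `Q xₖ ≠ xₖ`, then the unique
minimiser over `t ∈ ℝ` of `‖xₖ + t (Q xₖ − xₖ) − P_M x₀‖²` is
`tₖ = ½ + (Σᵢ ‖Q_{i−1} xₖ − Qᵢ xₖ‖²) / (2 ‖xₖ − Q xₖ‖²)`. -/
theorem gearhart_koshy_step_affine
    {H : Type*} [NormedAddCommGroup H] [InnerProductSpace ℝ H] [CompleteSpace H]
    (n : ℕ) (hn : 1 ≤ n)
    (M : ℕ → AffineSubspace ℝ H)
    (hclosed : ∀ i ∈ Finset.Icc 1 n, IsClosed (M i : Set H))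
    (hne : (⋂ i ∈ Finset.Icc 1 n, (M i : Set H)).Nonempty)
    (P : ℕ → H → H)
    (hP : ∀ i ∈ Finset.Icc 1 n, IsProjOn (M i : Set H) (P i))
    (PM : H → H)
    (hPM : IsProjOn (⋂ i ∈ Finset.Icc 1 n, (M i : Set H)) PM)
    (Q : ℕ → H → H)
    (hQ0 : Q 0 = id)
    (hQ : ∀ i, 1 ≤ i → i ≤ n → Q i = P i ∘ Q (i - 1))
    (x0 xk : H) (hxk : Q n xk ≠ xk)
    (tk : ℝ)
    (htk : tk = 1 / 2 + (∑ i ∈ Finset.Icc 1 n, ‖Q (i - 1) xk - Q i xk‖ ^ 2)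
      / (2 * ‖xk - Q n xk‖ ^ 2)) :
    (∀ t : ℝ, ‖xk + tk • (Q n xk - xk) - PM x0‖ ^ 2
        ≤ ‖xk + t • (Q n xk - xk) - PM x0‖ ^ 2) ∧
    (∀ t : ℝ, (∀ s : ℝ, ‖xk + t • (Q n xk - xk) - PM x0‖ ^ 2
        ≤ ‖xk + s • (Q n xk - xk) - PM x0‖ ^ 2) → t = tk) :=
  gearhart_koshy_step_affine_general n M P hP PM hPM Q hQ0 hQ x0 xk hxk tk htk
end

section
/- Let M_1, ..., M_n be closed affine subspaces of a real Hilbert space H with M := ∩_{i=1}^n M_i nonempty, and for each i let M_i' denote the linear subspace parallel to M_i. Define c_i := c(M_i', ∩_{j=i+1}^n M_j') for i ∈ {1,...,n−1} and c := (1 − ∏_{i=1}^{n−1}(1 − c_i²))^{1/2}. Let Q := P_{M_n} ⋯ P_{M_1}, Q_i := P_{M_i} ⋯ P_{M_1} for i ∈ {1,...,n}, Q_0 := I, and let (x_k) be generated from x_0 ∈ H by x_{k+1} := x_k + t_k (Q(x_k) − x_k), where t_k := 1/2 + (Σ_{i=1}^n ‖Q_{i−1}(x_k) − Q_i(x_k)‖²)/(2‖x_k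 − Q(x_k)‖²) if Q(x_k) ≠ x_k and t_k := 1 otherwise. Then there exists a sequence (f_k) with f_k ∈ [0,1] for all k such that for every k ∈ ℕ, ‖x_k − P_M(x_0)‖ ≤ (∏_{i=1}^k f_i) c^k ‖x_0 − P_M(x_0)‖. -/
open RealInnerProductSpace

/-- The cosine of the Friederichs angle between two (closed) linear subspaces. -/
noncomputable def friedrichsCos {H : Type*} [NormedAddCommGroup H]
    [InnerProductSpace ℝ H] (A B : Submodule ℝ H) : ℝ :=
  sSup {r : ℝ | ∃ a ∈ A ⊓ (A ⊓ B)ᗮ, ∃ b ∈ B ⊓ (A ⊓ B)ᗮ,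
    ‖a‖ = 1 ∧ ‖b‖ = 1 ∧ r = |⟪a, b⟫|}

/-!
Fix a point `m` of the intersection. Then `P_{M_i} w = m + π_{V_i} (w - m)` for the parallel
subspaces `V_i`, and everything reduces to the linear map `T = π_{V_n} ⋯ π_{V_1}` and
`B = V_1 ⊓ ⋯ ⊓ V_n`. Following Smith, Solmon and Wagner, `T` fixes `B`, maps `Bᗮ` into itself and
satisfies `‖T w‖² ≤ c² ‖w‖²` there, by induction on the number of factors. Hence
`P_M x_k = P_M x_0` along the iteration and `‖Q x_k - P_M x_0‖ ≤ c ‖x_k - P_M x_0‖`.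

Since `∑ ‖Q_{i-1} x - Q_i x‖² = ‖x - p‖² - ‖Q x - p‖²` for `p ∈ M` (Pythagoras at each
projection), the step size `t_k` makes `x_{k+1}` the foot of the perpendicular from `P_M x_0` to
the line through `x_k` and `Q x_k`, so `x_{k+1}` is no farther from `P_M x_0` than `Q x_k`. The
distance therefore shrinks by the factor `c` at every step, and `f = 1` will do.
-/

open Submodule

lemma biInf_Icc_add_one {α : Type*} [CompleteLattice α] (f : ℕ → α) (a b : ℕ) :
    ⨅ j ∈ Finset.Icc (a + 1) (b + 1), f j = ⨅ j ∈ Finset.Icc a b, f (j + 1) := by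
  rw [← Finset.image_add_right_Icc, Finset.iInf_finset_image]

lemma biInf_Icc_one_succ {α : Type*} [CompleteLattice α] (f : ℕ → α) (n : ℕ) :
    ⨅ j ∈ Finset.Icc 1 (n + 1), f j = f 1 ⊓ ⨅ j ∈ Finset.Icc 1 n, f (j + 1) := by
  rw [← Finset.insert_Icc_add_one_left_eq_Icc (by omega), Finset.iInf_insert, biInf_Icc_add_one]

lemma prod_Icc_one_succ {M : Type*} [CommMonoid M] (f : ℕ → M) (n : ℕ) :
    ∏ i ∈ Finset.Icc 1 (n + 1), f i = f 1 * ∏ i ∈ Finset.Icc 1 n, f (i + 1) := by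
  rw [← Finset.insert_Icc_add_one_left_eq_Icc (by omega), Finset.prod_insert (by simp),
    ← Finset.image_add_right_Icc, Finset.prod_image (by simp)]

section

variable {H : Type*} [NormedAddCommGroup H] [InnerProductSpace ℝ H]

lemma starProjection_mem_orthogonal_of_le {L K : Submodule ℝ H} [K.HasOrthogonalProjection]
    (hLK : L ≤ K) {y : H} (hy : y ∈ Lᗮ) : K.starProjection y ∈ Lᗮ := by
  simpa using Lᗮ.sub_mem hy (orthogonal_le hLK (K.sub_starProjection_mem_orthogonal y))

instance Submodule.HasOrthogonalProjection.iInf [CompleteSpace H] {ι : Sort*}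
    (V : ι → Submodule ℝ H) [∀ i, (V i).HasOrthogonalProjection] :
    (⨅ i, V i).HasOrthogonalProjection := by
  have hclosed : IsClosed ((⨅ i, V i : Submodule ℝ H) : Set H) := by
    rw [Submodule.coe_iInf]
    exact isClosed_iInter fun i => (V i).orthogonal_orthogonal ▸ (V i)ᗮ.isClosed_orthogonal
  have := hclosed.completeSpace_coe
  infer_instance

lemma abs_real_inner_le_one {a b : H} (ha : ‖a‖ = 1) (hb : ‖b‖ = 1) : |⟪a, b⟫| ≤ 1 := by
  simpa [ha, hb] using abs_real_inner_le_norm a b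

section FriedrichsAngle

variable (A B : Submodule ℝ H)

lemma friedrichsCos_nonneg : 0 ≤ friedrichsCos A B :=
  Real.sSup_nonneg fun _ ⟨_, _, _, _, _, _, hr⟩ => hr ▸ abs_nonneg _

lemma friedrichsCos_le_one : friedrichsCos A B ≤ 1 :=
  Real.sSup_le (fun _ ⟨_, _, _, _, ha, hb, hr⟩ => hr ▸ abs_real_inner_le_one ha hb) zero_le_one

lemma friedrichsCos_top : friedrichsCos A ⊤ = 0 := by
  rw [friedrichsCos, inf_top_eq, ← Real.sSup_empty]
  congr 1
  refine Set.eq_empty_iff_forall_notMem.2 fun r ⟨a, ha, _, _, ha1, _⟩ => ?_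
  rw [inf_orthogonal_eq_bot, mem_bot] at ha
  simp [ha] at ha1

lemma abs_inner_le_friedrichsCos_mul {a b : H} (ha : a ∈ A ⊓ (A ⊓ B)ᗮ)
    (hb : b ∈ B ⊓ (A ⊓ B)ᗮ) : |⟪a, b⟫| ≤ friedrichsCos A B * ‖a‖ * ‖b‖ := by
  rcases eq_or_ne a 0 with rfl | ha0
  · simp
  rcases eq_or_ne b 0 with rfl | hb0
  · simp
  have hunit : |⟪(‖a‖⁻¹ : ℝ) • a, (‖b‖⁻¹ : ℝ) • b⟫| ≤ friedrichsCos A B :=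
    le_csSup ⟨1, fun _ ⟨_, _, _, _, ha, hb, hr⟩ => hr ▸ abs_real_inner_le_one ha hb⟩
      ⟨_, Submodule.smul_mem _ _ ha, _, Submodule.smul_mem _ _ hb,
        norm_smul_inv_norm ha0, norm_smul_inv_norm hb0, rfl⟩
  have hscale : |⟪a, b⟫| = ‖a‖ * ‖b‖ * |⟪(‖a‖⁻¹ : ℝ) • a, (‖b‖⁻¹ : ℝ) • b⟫| := by
    rw [real_inner_smul_left, real_inner_smul_right, abs_mul, abs_mul, abs_inv, abs_inv,
      abs_norm, abs_norm]
    field_simp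
  rw [hscale]
  linarith [mul_le_mul_of_nonneg_left hunit (by positivity : 0 ≤ ‖a‖ * ‖b‖)]

lemma norm_starProjection_le_friedrichsCos_mul {K : Submodule ℝ H} [K.HasOrthogonalProjection]
    {y : H} (hyA : y ∈ A) (hy : y ∈ (A ⊓ K)ᗮ) :
    ‖K.starProjection y‖ ≤ friedrichsCos A K * ‖y‖ := by
  have hv := abs_inner_le_friedrichsCos_mul A K ⟨hyA, hy⟩
    ⟨K.starProjection_apply_mem y, starProjection_mem_orthogonal_of_le inf_le_right hy⟩
  have hyv : ⟪y, K.starProjection y⟫ = ‖K.starProjection y‖ ^ 2 := by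
    rw [← real_inner_self_eq_norm_sq, K.inner_starProjection_left_eq_right,
      K.starProjection_eq_self_iff.2 (K.starProjection_apply_mem y)]
  rw [hyv, abs_sq, sq] at hv
  rcases (norm_nonneg (K.starProjection y)).eq_or_lt with h0 | hpos
  · rw [← h0]
    exact mul_nonneg (friedrichsCos_nonneg A K) (norm_nonneg y)
  · exact le_of_mul_le_mul_right hv hpos

end FriedrichsAngle

structure ContractsOrthogonal (K : Submodule ℝ H) (F : ℝ) (R : H →L[ℝ] H) : Prop where
  nonneg : 0 ≤ F
  le_one : F ≤ 1
  apply_of_mem : ∀ u ∈ K, R u = u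
  apply_mem_orthogonal : ∀ w ∈ Kᗮ, R w ∈ Kᗮ
  norm_sq_apply_le : ∀ w ∈ Kᗮ, ‖R w‖ ^ 2 ≤ (1 - F) * ‖w‖ ^ 2

namespace ContractsOrthogonal

variable {K : Submodule ℝ H} {F : ℝ} {R : H →L[ℝ] H}

lemma id_top : ContractsOrthogonal (⊤ : Submodule ℝ H) 1 (ContinuousLinearMap.id ℝ H) where
  nonneg := zero_le_one
  le_one := le_rfl
  apply_of_mem _ _ := rfl
  apply_mem_orthogonal _ hw := hw
  norm_sq_apply_le w hw := by
    rw [top_orthogonal_eq_bot, mem_bot] at hw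
    simp [hw]

lemma apply_eq_starProjection_add [K.HasOrthogonalProjection] (hR : ContractsOrthogonal K F R)
    (y : H) : R y = K.starProjection y + R (y - K.starProjection y) := by
  rw [map_sub, hR.apply_of_mem _ (K.starProjection_apply_mem y), add_sub_cancel]

lemma apply_mem_orthogonal_of_le [K.HasOrthogonalProjection] (hR : ContractsOrthogonal K F R)
    {L : Submodule ℝ H} (hLK : L ≤ K) {y : H} (hy : y ∈ Lᗮ) : R y ∈ Lᗮ := by
  rw [hR.apply_eq_starProjection_add]
  exact Lᗮ.add_mem (starProjection_mem_orthogonal_of_le hLK hy)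
    (orthogonal_le hLK (hR.apply_mem_orthogonal _ (K.sub_starProjection_mem_orthogonal y)))

lemma starProjection_apply [K.HasOrthogonalProjection] (hR : ContractsOrthogonal K F R) (y : H) :
    K.starProjection (R y) = K.starProjection y := by
  rw [hR.apply_eq_starProjection_add, map_add,
    K.starProjection_eq_self_iff.2 (K.starProjection_apply_mem y),
    K.starProjection_apply_eq_zero_iff.2
      (hR.apply_mem_orthogonal _ (K.sub_starProjection_mem_orthogonal y)), add_zero]

lemma norm_sub_starProjection_le [K.HasOrthogonalProjection] (hR : ContractsOrthogonal K F R)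
    (y : H) : ‖R y - K.starProjection y‖ ≤ √(1 - F) * ‖y - K.starProjection y‖ := by
  have hw := K.sub_starProjection_mem_orthogonal y
  rw [hR.apply_eq_starProjection_add, add_sub_cancel_left, ← Real.sqrt_sq (norm_nonneg _),
    ← Real.sqrt_sq (norm_nonneg (y - _)), ← Real.sqrt_mul (sub_nonneg.2 hR.le_one)]
  exact Real.sqrt_le_sqrt (hR.norm_sq_apply_le _ hw)

/-- The inductive step of Smith, Solmon and Wagner: the component `π_K y` is shortened by the
factor `c(A, K)`, the complementary component by `√(1 - F)`. -/
lemma norm_sq_apply_le_of_mem [K.HasOrthogonalProjection] (hR : ContractsOrthogonal K F R)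
    {A : Submodule ℝ H} {y : H} (hyA : y ∈ A) (hy : y ∈ (A ⊓ K)ᗮ) :
    ‖R y‖ ^ 2 ≤ (1 - (1 - friedrichsCos A K ^ 2) * F) * ‖y‖ ^ 2 := by
  set v := K.starProjection y
  have hv : ‖v‖ ^ 2 ≤ friedrichsCos A K ^ 2 * ‖y‖ ^ 2 := by
    rw [← mul_pow]
    exact pow_le_pow_left₀ (norm_nonneg v) (norm_starProjection_le_friedrichsCos_mul A hyA hy) 2
  have hw : y - v ∈ Kᗮ := K.sub_starProjection_mem_orthogonal y
  have hvK : v ∈ K := K.starProjection_apply_mem y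
  have hRy : ‖R y‖ ^ 2 = ‖v‖ ^ 2 + ‖R (y - v)‖ ^ 2 := by
    rw [show R y = v + R (y - v) from hR.apply_eq_starProjection_add y, norm_add_sq_real,
      hR.apply_mem_orthogonal _ hw v hvK]
    ring
  have hy2 : ‖y‖ ^ 2 = ‖v‖ ^ 2 + ‖y - v‖ ^ 2 := by
    conv_lhs => rw [← add_sub_cancel v y]
    rw [norm_add_sq_real, hw v hvK]
    ring
  have hRw := hR.norm_sq_apply_le _ hw
  nlinarith [hR.nonneg]

lemma comp_starProjection [K.HasOrthogonalProjection] (hR : ContractsOrthogonal K F R)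
    (A : Submodule ℝ H) [A.HasOrthogonalProjection] :
    ContractsOrthogonal (A ⊓ K) ((1 - friedrichsCos A K ^ 2) * F) (R ∘L A.starProjection) := by
  have hc0 := friedrichsCos_nonneg A K
  have hc1 := friedrichsCos_le_one A K
  have hfac0 : 0 ≤ 1 - friedrichsCos A K ^ 2 := by nlinarith
  have hfac1 : 1 - friedrichsCos A K ^ 2 ≤ 1 := by nlinarith
  refine ⟨mul_nonneg hfac0 hR.nonneg, mul_le_one₀ hfac1 hR.nonneg hR.le_one, fun u hu => ?_,
    fun w hw => ?_, fun w hw => ?_⟩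
  · simp [A.starProjection_eq_self_iff.2 hu.1, hR.apply_of_mem u hu.2]
  · exact hR.apply_mem_orthogonal_of_le inf_le_right
      (starProjection_mem_orthogonal_of_le inf_le_left hw)
  · calc ‖R (A.starProjection w)‖ ^ 2
        ≤ (1 - (1 - friedrichsCos A K ^ 2) * F) * ‖A.starProjection w‖ ^ 2 :=
          hR.norm_sq_apply_le_of_mem (A.starProjection_apply_mem w)
            (starProjection_mem_orthogonal_of_le inf_le_left hw)
      _ ≤ (1 - (1 - friedrichsCos A K ^ 2) * F) * ‖w‖ ^ 2 := by
          gcongr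
          · nlinarith [mul_le_one₀ hfac1 hR.nonneg hR.le_one]
          · exact A.norm_starProjection_apply_le w

end ContractsOrthogonal

/-- If `t ‖q - x‖² = ⟪p - x, q - x⟫`, then `x + t • (q - x)` is the foot of the perpendicular
from `p` to the line through `x` and `q`. -/
lemma norm_add_smul_sub_le_of_mul_norm_sq_eq {x q p : H} {t : ℝ}
    (ht : t * ‖q - x‖ ^ 2 = ⟪p - x, q - x⟫) : ‖x + t • (q - x) - p‖ ≤ ‖q - p‖ := by
  have horth : ⟪x + t • (q - x) - p, (1 - t) • (q - x)⟫ = 0 := by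
    rw [show x + t • (q - x) - p = t • (q - x) - (p - x) by abel, real_inner_smul_right,
      inner_sub_left, real_inner_smul_left, real_inner_self_eq_norm_sq, ht, sub_self, mul_zero]
  have hsplit : q - p = (x + t • (q - x) - p) + (1 - t) • (q - x) := by module
  rw [← sq_le_sq₀ (norm_nonneg _) (norm_nonneg _), hsplit, norm_add_sq_real, horth, mul_zero,
    add_zero]
  exact le_add_of_nonneg_right (sq_nonneg _)

lemma norm_add_smul_sub_le {x q p : H} {t : ℝ}
    (ht : q ≠ x → t = 1 / 2 + (‖x - p‖ ^ 2 - ‖q - p‖ ^ 2) / (2 * ‖x - q‖ ^ 2)) :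
    ‖x + t • (q - x) - p‖ ≤ ‖q - p‖ := by
  refine norm_add_smul_sub_le_of_mul_norm_sq_eq ?_
  rcases eq_or_ne q x with rfl | hqx
  · simp
  have hpos : 0 < ‖q - x‖ := norm_pos_iff.2 (sub_ne_zero.2 hqx)
  rw [ht hqx, norm_sub_rev x q, show x - p = -(p - x) by abel, norm_neg,
    show q - p = (q - x) - (p - x) by abel, norm_sub_sq_real (q - x), real_inner_comm]
  field_simp
  ring

lemma IsProjOn.eq_add_starProjection {S : Set H} {P : H → H} (hP : IsProjOn S P)
    {V : Submodule ℝ H} [V.HasOrthogonalProjection] {m : H} (hS : ∀ w, w ∈ S ↔ w - m ∈ V)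
    (w : H) : P w = m + V.starProjection (w - m) := by
  have hmem : P w - m ∈ V := (hS _).1 (hP w).1
  have hmin : ‖(w - m) - (P w - m)‖ = ⨅ v : V, ‖(w - m) - v‖ := by
    refine le_antisymm (le_ciInf fun v => ?_) (ciInf_le ⟨0, ?_⟩ (⟨_, hmem⟩ : V))
    · have := (hP w).2 (m + v) ((hS _).2 (by simp))
      rwa [sub_sub_sub_cancel_right, sub_sub]
    · rintro _ ⟨v, rfl⟩
      exact norm_nonneg _
  rw [V.eq_starProjection_of_mem_of_inner_eq_zero hmem
    ((V.norm_eq_iInf_iff_inner_eq_zero hmem).1 hmin)]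
  abel

section ProjectionChain

variable (V : ℕ → Submodule ℝ H)

noncomputable def projComp [∀ j, (V j).HasOrthogonalProjection] : ℕ → H →L[ℝ] H
  | 0 => ContinuousLinearMap.id ℝ H
  | k + 1 => (V (k + 1)).starProjection ∘L projComp k

/-- Unlike the product in the theorem, this one runs up to `i = n`; that factor is `1`, as
`c(V n, ⊤) = 0`, and keeping it makes the recursion in `n` uniform. -/
noncomputable def friedrichsProd (n : ℕ) : ℝ :=
  ∏ i ∈ Finset.Icc 1 n, (1 - friedrichsCos (V i) (⨅ j ∈ Finset.Icc (i + 1) n, V j) ^ 2)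

lemma projComp_succ' [∀ j, (V j).HasOrthogonalProjection] (k : ℕ) :
    projComp V (k + 1) = projComp (fun j => V (j + 1)) k ∘L (V 1).starProjection := by
  induction k with
  | zero => rfl
  | succ k ih => rw [projComp, ih, projComp, ContinuousLinearMap.comp_assoc]

lemma friedrichsProd_succ (n : ℕ) :
    friedrichsProd V (n + 1) = (1 - friedrichsCos (V 1) (⨅ j ∈ Finset.Icc 1 n, V (j + 1)) ^ 2) *
      friedrichsProd (fun j => V (j + 1)) n := by
  simp only [friedrichsProd, prod_Icc_one_succ, biInf_Icc_add_one]

lemma friedrichsProd_eq_prod_Icc_sub_one (n : ℕ) :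
    friedrichsProd V n =
      ∏ i ∈ Finset.Icc 1 (n - 1),
        (1 - friedrichsCos (V i) (⨅ j ∈ Finset.Icc (i + 1) n, V j) ^ 2) := by
  cases n with
  | zero => rfl
  | succ n =>
    rw [friedrichsProd, Finset.prod_Icc_succ_top (by omega),
      Finset.Icc_eq_empty_of_lt (Nat.lt_succ_self _)]
    simp [friedrichsCos_top]

lemma friedrichsProd_congr {W : ℕ → Submodule ℝ H} {n : ℕ} (h : ∀ j ∈ Finset.Icc 1 n, V j = W j) :
    friedrichsProd V n = friedrichsProd W n := by
  refine Finset.prod_congr rfl fun i hi => ?_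
  rw [h i hi, iInf_congr fun j => iInf_congr fun hj =>
    h j (Finset.Icc_subset_Icc (by omega) le_rfl hj)]

theorem contractsOrthogonal_projComp [CompleteSpace H] [∀ j, (V j).HasOrthogonalProjection]
    (n : ℕ) :
    ContractsOrthogonal (⨅ j ∈ Finset.Icc 1 n, V j) (friedrichsProd V n) (projComp V n) := by
  induction n generalizing V with
  | zero => simpa [friedrichsProd, projComp] using ContractsOrthogonal.id_top
  | succ n ih =>
    rw [biInf_Icc_one_succ, friedrichsProd_succ, projComp_succ']
    exact (ih _).comp_starProjection (V 1)

lemma sum_norm_sq_projComp_sub [∀ j, (V j).HasOrthogonalProjection] (n : ℕ) (z : H) {b : H}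
    (hb : ∀ j ∈ Finset.Icc 1 n, b ∈ V j) :
    ∑ i ∈ Finset.Icc 1 n, ‖projComp V (i - 1) z - projComp V i z‖ ^ 2 =
      ‖z - b‖ ^ 2 - ‖projComp V n z - b‖ ^ 2 := by
  induction n with
  | zero => simp [projComp]
  | succ n ih =>
    rw [Finset.sum_Icc_succ_top (by omega), ih fun j hj => hb j (Finset.Icc_subset_Icc_right
      n.le_succ hj), Nat.add_sub_cancel]
    set y := projComp V n z
    have hpyth : ‖y - b‖ ^ 2 =
        ‖y - (V (n + 1)).starProjection y‖ ^ 2 + ‖(V (n + 1)).starProjection y - b‖ ^ 2 := by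
      rw [← sub_add_sub_cancel y ((V (n + 1)).starProjection y) b, norm_add_sq_real,
        (V (n + 1)).starProjection_inner_eq_zero _ _
          ((V (n + 1)).sub_mem ((V (n + 1)).starProjection_apply_mem y) (hb _ (by simp)))]
      ring
    simp only [projComp, ContinuousLinearMap.comp_apply]
    linarith

theorem gearhart_koshy_linear_rate [CompleteSpace H] [∀ j, (V j).HasOrthogonalProjection] (n : ℕ)
    (z : ℕ → H) (t : ℕ → ℝ)
    (ht : ∀ k, projComp V n (z k) ≠ z k → t k = 1 / 2 +
      (∑ i ∈ Finset.Icc 1 n, ‖projComp V (i - 1) (z k) - projComp V i (z k)‖ ^ 2) /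
        (2 * ‖z k - projComp V n (z k)‖ ^ 2))
    (hz : ∀ k, z (k + 1) = z k + t k • (projComp V n (z k) - z k)) (k : ℕ) :
    ‖z k - (⨅ j ∈ Finset.Icc 1 n, V j).starProjection (z 0)‖ ≤
      √(1 - friedrichsProd V n) ^ k *
        ‖z 0 - (⨅ j ∈ Finset.Icc 1 n, V j).starProjection (z 0)‖ := by
  set B := ⨅ j ∈ Finset.Icc 1 n, V j
  have hT := contractsOrthogonal_projComp V n
  have hfix : ∀ k, B.starProjection (z k) = B.starProjection (z 0) := by
    intro k
    induction k with
    | zero => rfl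
    | succ k ih =>
      rw [hz, map_add, map_smul, map_sub, hT.starProjection_apply, sub_self, smul_zero, add_zero,
        ih]
  have hb : ∀ j ∈ Finset.Icc 1 n, B.starProjection (z 0) ∈ V j := fun j hj =>
    (mem_iInf _).1 ((mem_iInf _).1 (B.starProjection_apply_mem (z 0)) j) hj
  refine le_geom (u := fun k => ‖z k - B.starProjection (z 0)‖) (Real.sqrt_nonneg _) k
    fun k _ => ?_
  calc ‖z (k + 1) - B.starProjection (z 0)‖
      ≤ ‖projComp V n (z k) - B.starProjection (z 0)‖ := by
        rw [hz k]
        exact norm_add_smul_sub_le fun h => by rw [ht k h, sum_norm_sq_projComp_sub V n (z k) hb]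
    _ ≤ √(1 - friedrichsProd V n) * ‖z k - B.starProjection (z 0)‖ := by
        rw [← hfix k]
        exact hT.norm_sub_starProjection_le (z k)

end ProjectionChain

lemma eq_add_projComp_sub {V : ℕ → Submodule ℝ H} [∀ j, (V j).HasOrthogonalProjection] {n : ℕ}
    {m : H} {P Q : ℕ → H → H}
    (hP : ∀ j ∈ Finset.Icc 1 n, ∀ w, P j w = m + (V j).starProjection (w - m))
    (hQ0 : Q 0 = id) (hQ : ∀ i, 1 ≤ i → i ≤ n → Q i = P i ∘ Q (i - 1)) :
    ∀ i ≤ n, ∀ w, Q i w = m + projComp V i (w - m) := by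
  intro i
  induction i with
  | zero => simp [hQ0, projComp]
  | succ i ih =>
    intro hi w
    rw [hQ (i + 1) (by omega) hi, Function.comp_apply, Nat.add_sub_cancel, ih (by omega),
      hP (i + 1) (Finset.mem_Icc.2 ⟨by omega, hi⟩), add_sub_cancel_left]
    rfl


theorem gearhart_koshy_rate_of_eq_add_projComp [CompleteSpace H] {V : ℕ → Submodule ℝ H}
    [∀ j, (V j).HasOrthogonalProjection] {n : ℕ} {m : H} {Q : ℕ → H → H}
    (hQ : ∀ i ≤ n, ∀ w, Q i w = m + projComp V i (w - m)) (x : ℕ → H) (t : ℕ → ℝ)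
    (ht : ∀ k, Q n (x k) ≠ x k → t k = 1 / 2 +
      (∑ i ∈ Finset.Icc 1 n, ‖Q (i - 1) (x k) - Q i (x k)‖ ^ 2) / (2 * ‖x k - Q n (x k)‖ ^ 2))
    (hx : ∀ k, x (k + 1) = x k + t k • (Q n (x k) - x k)) (k : ℕ) :
    ‖x k - (m + (⨅ j ∈ Finset.Icc 1 n, V j).starProjection (x 0 - m))‖ ≤
      √(1 - friedrichsProd V n) ^ k *
        ‖x 0 - (m + (⨅ j ∈ Finset.Icc 1 n, V j).starProjection (x 0 - m))‖ := by
  have key := gearhart_koshy_linear_rate V n (fun k => x k - m) t (fun k hk => ?_) (fun k => ?_) k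
  · simpa only [sub_sub] using key
  · have hQx : Q n (x k) ≠ x k := by
      rwa [hQ n le_rfl, ne_eq, ← eq_sub_iff_add_eq']
    rw [ht k hQx, hQ n le_rfl, sub_add_eq_sub_sub]
    congr 2
    refine Finset.sum_congr rfl fun i hi => ?_
    have hin := (Finset.mem_Icc.1 hi).2
    rw [hQ i hin, hQ (i - 1) (by omega), add_sub_add_left_eq_sub]
  · simp only [hx k, hQ n le_rfl]
    module

end

theorem gearhart_koshy_affine_rate_general
    {H : Type*} [NormedAddCommGroup H] [InnerProductSpace ℝ H] [CompleteSpace H]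
    (n : ℕ)
    (M : ℕ → AffineSubspace ℝ H)
    (hclosed : ∀ i ∈ Finset.Icc 1 n, IsClosed (M i : Set H))
    (hne : (⋂ i ∈ Finset.Icc 1 n, (M i : Set H)).Nonempty)
    (P : ℕ → H → H)
    (hP : ∀ i ∈ Finset.Icc 1 n, IsProjOn (M i : Set H) (P i))
    (PM : H → H)
    (hPM : IsProjOn (⋂ i ∈ Finset.Icc 1 n, (M i : Set H)) PM)
    (Q : ℕ → H → H)
    (hQ0 : Q 0 = id)
    (hQ : ∀ i, 1 ≤ i → i ≤ n → Q i = P i ∘ Q (i - 1))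
    (c : ℕ → ℝ)
    (hc : ∀ i ∈ Finset.Icc 1 (n - 1),
      c i = friedrichsCos ((M i).direction) (⨅ j ∈ Finset.Icc (i + 1) n, (M j).direction))
    (C : ℝ)
    (hC : C = Real.sqrt (1 - ∏ i ∈ Finset.Icc 1 (n - 1), (1 - c i ^ 2)))
    (x0 : H) (x : ℕ → H) (t : ℕ → ℝ)
    (hx0 : x 0 = x0)
    (ht : ∀ k, (Q n (x k) ≠ x k →
        t k = 1 / 2 + (∑ i ∈ Finset.Icc 1 n, ‖Q (i - 1) (x k) - Q i (x k)‖ ^ 2)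
          / (2 * ‖x k - Q n (x k)‖ ^ 2)) ∧
      (Q n (x k) = x k → t k = 1))
    (hx : ∀ k, x (k + 1) = x k + t k • (Q n (x k) - x k)) :
    ∃ f : ℕ → ℝ, (∀ k, f k ∈ Set.Icc (0 : ℝ) 1) ∧
      ∀ k, ‖x k - PM x0‖ ≤ (∏ i ∈ Finset.Icc 1 k, f i) * C ^ k * ‖x0 - PM x0‖ := by
  obtain ⟨m, hm⟩ := hne
  -- Closing the directions equips every `V j` with an orthogonal projection; for `j ∈ [1, n]`
  -- the directions are closed already.
  set V : ℕ → Submodule ℝ H := fun j => (M j).direction.topologicalClosure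
  have hV : ∀ j ∈ Finset.Icc 1 n, V j = (M j).direction := fun j hj =>
    ((M j).isClosed_direction_iff.2 (hclosed j hj)).submodule_topologicalClosure_eq
  have hmem : ∀ j ∈ Finset.Icc 1 n, ∀ w, w ∈ M j ↔ w - m ∈ V j := fun j hj w => by
    rw [hV j hj, ← vsub_eq_sub,
      AffineSubspace.vsub_right_mem_direction_iff_mem (Set.mem_iInter₂.1 hm j hj)]
  have hQV := eq_add_projComp_sub (fun j hj => (hP j hj).eq_add_starProjection (hmem j hj)) hQ0 hQ
  have hPMV := hPM.eq_add_starProjection (V := ⨅ j ∈ Finset.Icc 1 n, V j) fun w => by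
    simp only [Set.mem_iInter₂, mem_iInf]
    exact forall₂_congr fun j hj => hmem j hj w
  have hCV : C = √(1 - friedrichsProd V n) := by
    rw [hC, friedrichsProd_congr V hV, friedrichsProd_eq_prod_Icc_sub_one]
    congr 2
    exact Finset.prod_congr rfl fun i hi => by rw [hc i hi]
  refine ⟨fun _ => 1, fun _ => ⟨zero_le_one, le_rfl⟩, fun k => ?_⟩
  simpa [hPMV, hCV, hx0] using
    gearhart_koshy_rate_of_eq_add_projComp hQV x t (fun k => (ht k).1) hx k

/-- Gearhart–Koshy acceleration for affine subspaces: there exists a sequence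
`(fₖ) ⊆ [0,1]` with `‖xₖ − P_M x₀‖ ≤ (∏_{i=1}^k fᵢ) cᵏ ‖x₀ − P_M x₀‖`. -/
theorem gearhart_koshy_affine_rate
    {H : Type*} [NormedAddCommGroup H] [InnerProductSpace ℝ H] [CompleteSpace H]
    (n : ℕ) (hn : 1 ≤ n)
    (M : ℕ → AffineSubspace ℝ H)
    (hclosed : ∀ i ∈ Finset.Icc 1 n, IsClosed (M i : Set H))
    (hne : (⋂ i ∈ Finset.Icc 1 n, (M i : Set H)).Nonempty)
    (P : ℕ → H → H)
    (hP : ∀ i ∈ Finset.Icc 1 n, IsProjOn (M i : Set H) (P i))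
    (PM : H → H)
    (hPM : IsProjOn (⋂ i ∈ Finset.Icc 1 n, (M i : Set H)) PM)
    (Q : ℕ → H → H)
    (hQ0 : Q 0 = id)
    (hQ : ∀ i, 1 ≤ i → i ≤ n → Q i = P i ∘ Q (i - 1))
    (c : ℕ → ℝ)
    (hc : ∀ i ∈ Finset.Icc 1 (n - 1),
      c i = friedrichsCos ((M i).direction) (⨅ j ∈ Finset.Icc (i + 1) n, (M j).direction))
    (C : ℝ)
    (hC : C = Real.sqrt (1 - ∏ i ∈ Finset.Icc 1 (n - 1), (1 - c i ^ 2)))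
    (x0 : H) (x : ℕ → H) (t : ℕ → ℝ)
    (hx0 : x 0 = x0)
    (ht : ∀ k, (Q n (x k) ≠ x k →
        t k = 1 / 2 + (∑ i ∈ Finset.Icc 1 n, ‖Q (i - 1) (x k) - Q i (x k)‖ ^ 2)
          / (2 * ‖x k - Q n (x k)‖ ^ 2)) ∧
      (Q n (x k) = x k → t k = 1))
    (hx : ∀ k, x (k + 1) = x k + t k • (Q n (x k) - x k)) :
    ∃ f : ℕ → ℝ, (∀ k, f k ∈ Set.Icc (0 : ℝ) 1) ∧
      ∀ k, ‖x k - PM x0‖ ≤ (∏ i ∈ Finset.Icc 1 k, f i) * C ^ k * ‖x0 - PM x0‖ :=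
  gearhart_koshy_affine_rate_general n M hclosed hne P hP PM hPM Q hQ0 hQ c hc C hC x0 x t hx0 ht hx
end

section
/- Let M_1, ..., M_n be closed affine subspaces of a real Hilbert space H with M := ∩_{i=1}^n M_i nonempty. Let S := P_{M_1} P_{M_2} ⋯ P_{M_{n−1}} P_{M_n} P_{M_{n−1}} ⋯ P_{M_1}, and define S_0 := I, S_i := P_{M_i} ⋯ P_{M_1} for 1 ≤ i ≤ n, and S_i := P_{M_{2n−i}} ⋯ P_{M_{n−1}} P_{M_n} S_n for n+1 ≤ i ≤ 2n−1 (so S_{2n−1} = S). Given x_0 ∈ H, set z_0 := S(x_0) and z_{k+1} := z_k + s_k (S(z_k) − z_k), where s_k := 1/2 + (Σ_{i=1}^{2n−1} ‖S_{i−1}(z_k) − S_i(z_k)‖²)/(2‖z_k − S(z_k)‖²) if S(z_k) ≠ z_k and s_k := 1 otherwise. Then for every k ∈ ℕ, ‖z_k − P_M(x_0)‖ ≤ ‖S^{k+1}(x_0) − P_M(x_0)‖. -/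
open RealInnerProductSpace Finset

section

variable {H : Type*} [NormedAddCommGroup H] [InnerProductSpace ℝ H]

namespace LinearMap.IsSymmetricProjection

variable {Q : Module.End ℝ H} (hQ : Q.IsSymmetricProjection)
include hQ

lemma inner_apply_eq_inner_apply_apply (u v : H) : ⟪Q u, v⟫ = ⟪Q u, Q v⟫ := by
  rw [hQ.isSymmetric u (Q v), ← Module.End.mul_apply, hQ.isIdempotentElem.eq, hQ.isSymmetric]

lemma norm_sq_eq_norm_apply_sq_add_norm_sub_sq (v : H) :
    ‖v‖ ^ 2 = ‖Q v‖ ^ 2 + ‖v - Q v‖ ^ 2 := by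
  have h : ⟪v, Q v⟫ = ‖Q v‖ ^ 2 := by
    rw [← real_inner_self_eq_norm_sq, real_inner_comm, hQ.inner_apply_eq_inner_apply_apply]
  rw [norm_sub_sq_real, h]
  ring

end LinearMap.IsSymmetricProjection

variable [CompleteSpace H] in
lemma IsProjOn.exists_isSymmetricProjection {C : AffineSubspace ℝ H} {P : H → H}
    (hP : IsProjOn (C : Set H) P) (hC : IsClosed (C : Set H)) {m : H} (hm : m ∈ C) :
    ∃ Q : Module.End ℝ H, Q.IsSymmetricProjection ∧ ∀ v, P (m + v) = m + Q v := by
  have : IsClosed (C.direction : Set H) := C.isClosed_direction_iff.2 hC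
  have : CompleteSpace C.direction := this.completeSpace_coe
  refine ⟨C.direction.starProjection, C.direction.isSymmetricProjection_starProjection,
    fun v => ?_⟩
  set p := C.direction.starProjection v
  have hpC : m + p ∈ C := by
    simpa [add_comm] using
      AffineSubspace.vadd_mem_of_mem_direction (C.direction.starProjection_apply_mem v) hm
  have hpyth : ∀ y ∈ C, ‖m + v - y‖ ^ 2 = ‖m + v - (m + p)‖ ^ 2 + ‖m + p - y‖ ^ 2 := by
    intro y hy
    have hperp : ⟪v - p, p - (y - m)⟫ = 0 :=
      C.direction.starProjection_inner_eq_zero v _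
        (C.direction.sub_mem (C.direction.starProjection_apply_mem v)
          (AffineSubspace.vsub_mem_direction hy hm))
    rw [show m + v - y = (v - p) + (p - (y - m)) by abel, norm_add_sq_real, hperp,
      show m + v - (m + p) = v - p by abel, show m + p - y = p - (y - m) by abel]
    ring
  obtain ⟨hPC, hPmin⟩ := hP (m + v)
  have h := hpyth _ hPC
  have hle := hPmin _ hpC
  have : ‖m + p - P (m + v)‖ = 0 := by
    nlinarith [norm_nonneg (m + v - P (m + v)), norm_nonneg (m + v - (m + p))]
  exact (sub_eq_zero.1 (norm_eq_zero.1 this)).symm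

def leftPartialProd {M : Type*} [Monoid M] (R : ℕ → M) : ℕ → M
  | 0 => 1
  | k + 1 => R (k + 1) * leftPartialProd R k

@[simp]
lemma leftPartialProd_zero {M : Type*} [Monoid M] (R : ℕ → M) : leftPartialProd R 0 = 1 := rfl

lemma leftPartialProd_succ {M : Type*} [Monoid M] (R : ℕ → M) (k : ℕ) :
    leftPartialProd R (k + 1) = R (k + 1) * leftPartialProd R k := rfl

lemma apply_add_eq_leftPartialProd {𝕜 V : Type*} [Semiring 𝕜] [AddCommMonoid V] [Module 𝕜 V]
    {S F : ℕ → V → V} {R : ℕ → Module.End 𝕜 V} {m : V} {N : ℕ}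
    (hS0 : S 0 = id) (hS : ∀ i ∈ Icc 1 N, S i = F i ∘ S (i - 1))
    (hF : ∀ i ∈ Icc 1 N, ∀ w, F i (m + w) = m + R i w) :
    ∀ i ≤ N, ∀ w, S i (m + w) = m + leftPartialProd R i w := by
  intro i hi w
  induction i with
  | zero => simp [hS0]
  | succ i ih =>
    have hi' : i + 1 ∈ Icc 1 N := mem_Icc.2 ⟨by omega, hi⟩
    rw [hS _ hi', Function.comp_apply, Nat.add_sub_cancel, ih (by omega), hF _ hi',
      leftPartialProd_succ, Module.End.mul_apply]

lemma iterate_apply_eq_add_pow_apply {𝕜 V : Type*} [Semiring 𝕜] [AddCommGroup V] [Module 𝕜 V]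
    {f : V → V} {T : Module.End 𝕜 V} {m : V} (hf : ∀ w, f (m + w) = m + T w) (k : ℕ) (x : V) :
    f^[k] x = m + (T ^ k) (x - m) := by
  have hsemi : Function.Semiconj (m + ·) T f := fun w => (hf w).symm
  rw [Module.End.coe_pow]
  simpa only [add_sub_cancel] using (hsemi.iterate_right k (x - m)).symm

def symmIndex (n i : ℕ) : ℕ := if i ≤ n then i else 2 * n - i

lemma symmIndex_mem_Icc {n i : ℕ} (hi : i ∈ Icc 1 (2 * n - 1)) : symmIndex n i ∈ Icc 1 n := by
  simp only [symmIndex, mem_Icc] at hi ⊢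
  split_ifs <;> omega

lemma symmIndex_two_mul_sub {n i : ℕ} (hi : i ∈ Ico 1 n) :
    symmIndex n (2 * n - i) = symmIndex n i := by
  simp only [symmIndex, mem_Ico] at hi ⊢
  split_ifs <;> omega

lemma comp_symmIndex_of_comp {α : Type*} {S P : ℕ → α → α} {n : ℕ}
    (hS1 : ∀ i, 1 ≤ i → i ≤ n → S i = P i ∘ S (i - 1))
    (hS2 : ∀ i, n + 1 ≤ i → i ≤ 2 * n - 1 → S i = P (2 * n - i) ∘ S (i - 1)) :
    ∀ i ∈ Icc 1 (2 * n - 1), S i = P (symmIndex n i) ∘ S (i - 1) := by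
  intro i hi
  rw [mem_Icc] at hi
  unfold symmIndex
  split_ifs with h
  · exact hS1 i hi.1 h
  · exact hS2 i (by omega) hi.2

lemma norm_apply_sq_le_inner_of_inner_eq {T A : Module.End ℝ H}
    (hTA : ∀ u v, ⟪T u, v⟫ = ⟪A u, A v⟫) (hA : ∀ u, ‖A u‖ ≤ ‖u‖) (u : H) :
    ‖T u‖ ^ 2 ≤ ⟪T u, u⟫ := by
  have h : ‖T u‖ ^ 2 ≤ ‖A u‖ * ‖T u‖ := calc
    ‖T u‖ ^ 2 = ⟪A u, A (T u)⟫ := by rw [← hTA, real_inner_self_eq_norm_sq]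
    _ ≤ ‖A u‖ * ‖A (T u)‖ := real_inner_le_norm _ _
    _ ≤ ‖A u‖ * ‖T u‖ := by gcongr; exact hA _
  rw [hTA, real_inner_self_eq_norm_sq]
  nlinarith [sq_nonneg (‖A u‖ - ‖T u‖), norm_nonneg (T u)]

section PartialProd

variable {R : ℕ → Module.End ℝ H}

lemma sum_norm_sub_leftPartialProd_sq {N : ℕ}
    (hR : ∀ i ∈ Icc 1 N, (R i).IsSymmetricProjection) (v : H) :
    ∑ i ∈ Icc 1 N, ‖leftPartialProd R (i - 1) v - leftPartialProd R i v‖ ^ 2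
      = ‖v‖ ^ 2 - ‖leftPartialProd R N v‖ ^ 2 := by
  induction N with
  | zero => simp
  | succ N ih =>
    rw [sum_Icc_succ_top (by omega), ih fun i hi => hR i (by simp at hi ⊢; omega),
      Nat.add_sub_cancel, leftPartialProd_succ, Module.End.mul_apply,
      (hR (N + 1) (by simp)).norm_sq_eq_norm_apply_sq_add_norm_sub_sq (leftPartialProd R N v)]
    ring

lemma norm_leftPartialProd_apply_le {N : ℕ}
    (hR : ∀ i ∈ Icc 1 N, (R i).IsSymmetricProjection) (v : H) :
    ‖leftPartialProd R N v‖ ≤ ‖v‖ := by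
  rw [← sq_le_sq₀ (norm_nonneg _) (norm_nonneg _), ← sub_nonneg,
    ← sum_norm_sub_leftPartialProd_sq hR]
  positivity

lemma sum_norm_sub_sq_of_apply_add_eq {S : ℕ → H → H} {m : H} {N : ℕ}
    (hR : ∀ i ∈ Icc 1 N, (R i).IsSymmetricProjection)
    (hSR : ∀ i ≤ N, ∀ w, S i (m + w) = m + leftPartialProd R i w) (v : H) :
    ∑ i ∈ Icc 1 N, ‖S (i - 1) (m + v) - S i (m + v)‖ ^ 2
      = ‖v‖ ^ 2 - ‖leftPartialProd R N v‖ ^ 2 := by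
  rw [← sum_norm_sub_leftPartialProd_sq hR]
  refine sum_congr rfl fun i hi => ?_
  rw [mem_Icc] at hi
  rw [hSR i hi.2, hSR (i - 1) (by omega), add_sub_add_left_eq_sub]

lemma inner_leftPartialProd_palindrome {n : ℕ} (hn : 1 ≤ n)
    (hR : ∀ i ∈ Icc 1 (2 * n - 1), (R i).IsSymmetricProjection)
    (hpal : ∀ i ∈ Ico 1 n, R (2 * n - i) = R i) (u v : H) :
    ⟪leftPartialProd R (2 * n - 1) u, v⟫ = ⟪leftPartialProd R n u, leftPartialProd R n v⟫ := by
  have key : ∀ j < n, ⟪leftPartialProd R (2 * n - 1) u, v⟫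
      = ⟪leftPartialProd R (2 * n - 1 - j) u, leftPartialProd R j v⟫ := by
    intro j hj
    induction j with
    | zero => simp
    | succ j ih =>
      have hj' : j + 1 ∈ Ico 1 n := mem_Ico.2 ⟨by omega, hj⟩
      rw [ih (by omega), show 2 * n - 1 - j = 2 * n - 1 - (j + 1) + 1 by omega,
        leftPartialProd_succ, show 2 * n - 1 - (j + 1) + 1 = 2 * n - (j + 1) by omega,
        hpal _ hj', Module.End.mul_apply, (hR _ (by simp at hj' ⊢; omega)).isSymmetric,
        ← Module.End.mul_apply, ← leftPartialProd_succ]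
  obtain ⟨k, rfl⟩ : ∃ k, n = k + 1 := ⟨n - 1, by omega⟩
  rw [key k (by omega), show 2 * (k + 1) - 1 - k = k + 1 by omega, leftPartialProd_succ,
    Module.End.mul_apply, Module.End.mul_apply,
    (hR _ (by simp; omega)).inner_apply_eq_inner_apply_apply]

lemma isSymmetric_and_norm_sq_le_inner_of_palindrome {n : ℕ} (hn : 1 ≤ n)
    (hR : ∀ i ∈ Icc 1 (2 * n - 1), (R i).IsSymmetricProjection)
    (hpal : ∀ i ∈ Ico 1 n, R (2 * n - i) = R i) :
    (leftPartialProd R (2 * n - 1)).IsSymmetric ∧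
      ∀ u, ‖leftPartialProd R (2 * n - 1) u‖ ^ 2 ≤ ⟪leftPartialProd R (2 * n - 1) u, u⟫ := by
  have hTA := inner_leftPartialProd_palindrome hn hR hpal
  refine ⟨fun u v => by rw [hTA, real_inner_comm, ← hTA, real_inner_comm], ?_⟩
  exact norm_apply_sq_le_inner_of_inner_eq hTA
    (norm_leftPartialProd_apply_le fun i hi => hR i (by simp at hi ⊢; omega))

end PartialProd

section Core

variable {T : Module.End ℝ H} (hT : T.IsSymmetric) (hT2 : ∀ u, ‖T u‖ ^ 2 ≤ ⟪T u, u⟫)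

include hT2 in
lemma inner_apply_self_le_norm_sq (u : H) : ⟪T u, u⟫ ≤ ‖u‖ ^ 2 := by
  have hCS := real_inner_le_norm (T u) u
  have hTu : ‖T u‖ ≤ ‖u‖ := by nlinarith [hT2 u, norm_nonneg (T u), norm_nonneg u]
  nlinarith [norm_nonneg u]

include hT hT2 in
lemma sq_mul_inner_le_sq_mul_inner_apply {a b : ℝ} (ha : 0 ≤ a) (hb : 0 ≤ b) (u : H) :
    b ^ 2 * ⟪a • T u - b • u, u - T u⟫ ≤ a ^ 2 * ⟪a • T (T u) - b • T u, T u - T (T u)⟫ := by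
  set y := a • T u - b • u
  -- `a²⟪(aT - b)(1 - T)T²u, u⟫ - b²⟪(aT - b)(1 - T)u, u⟫ = ⟪(aT + b)(1 - T)y, y⟫`
  have key : a ^ 2 * ⟪a • T (T u) - b • T u, T u - T (T u)⟫ - b ^ 2 * ⟪y, u - T u⟫
      = a * (⟪T y, y⟫ - ‖T y‖ ^ 2) + b * (‖y‖ ^ 2 - ⟪T y, y⟫) := by
    simp only [y, map_sub, map_smul, ← real_inner_self_eq_norm_sq, inner_sub_left,
      inner_sub_right, real_inner_smul_left, real_inner_smul_right]
    rw [hT (T u) u, real_inner_comm (T u) u, real_inner_comm (T (T u)) (T u)]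
    ring
  have h1 := hT2 y
  have h2 := inner_apply_self_le_norm_sq hT2 y
  nlinarith [mul_nonneg ha (sub_nonneg.2 h1), mul_nonneg hb (sub_nonneg.2 h2)]

include hT hT2 in
lemma inner_pow_apply_nonneg {a b : ℝ} (ha : 0 < a) (hb : 0 ≤ b) {z : H}
    (h0 : 0 ≤ ⟪a • T z - b • z, z - T z⟫) (j : ℕ) :
    0 ≤ ⟪a • T ((T ^ j) z) - b • (T ^ j) z, (T ^ j) z - T ((T ^ j) z)⟫ := by
  induction j with
  | zero => simpa using h0
  | succ j ih =>
    rw [pow_succ', Module.End.mul_apply]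
    refine nonneg_of_mul_nonneg_right ?_ (pow_pos ha 2)
    exact (mul_nonneg (sq_nonneg b) ih).trans
      (sq_mul_inner_le_sq_mul_inner_apply hT hT2 ha.le hb _)

include hT hT2 in
theorem norm_pow_apply_add_smul_le {z : H} {s : ℝ} (hs : 1 ≤ s)
    (hopt : ⟪z, z - T z⟫ = s * ‖z - T z‖ ^ 2) (j : ℕ) :
    ‖(T ^ j) (z + s • (T z - z))‖ ≤ ‖(T ^ (j + 1)) z‖ := by
  have hcomm : (T ^ j) (T z) = T ((T ^ j) z) := by
    rw [← Module.End.mul_apply, ← pow_succ, pow_succ', Module.End.mul_apply]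
  rw [map_add, map_smul, map_sub, hcomm, pow_succ', Module.End.mul_apply]
  set y := (T ^ j) z
  have h0 : ⟪(s + 1) • T z - (s - 1) • z, z - T z⟫ = (s - 1) * ‖z - T z‖ ^ 2 := by
    have : ⟪T z, z - T z⟫ = ⟪z, z - T z⟫ - ‖z - T z‖ ^ 2 := by
      rw [← real_inner_self_eq_norm_sq, ← inner_sub_left, sub_sub_cancel]
    rw [inner_sub_left, real_inner_smul_left, real_inner_smul_left, this, hopt]
    ring
  have hG := inner_pow_apply_nonneg hT hT2 (by linarith) (by linarith)
    (h0 ▸ mul_nonneg (by linarith) (sq_nonneg _)) j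
  have key : ‖y + s • (T y - y)‖ ^ 2
      = ‖T y‖ ^ 2 - (s - 1) * ⟪(s + 1) • T y - (s - 1) • y, y - T y⟫ := by
    simp only [← real_inner_self_eq_norm_sq, inner_add_left, inner_add_right, inner_sub_left,
      inner_sub_right, real_inner_smul_left, real_inner_smul_right, real_inner_comm y (T y)]
    ring
  rw [← sq_le_sq₀ (norm_nonneg _) (norm_nonneg _), key]
  nlinarith [mul_nonneg (sub_nonneg.2 hs) hG]

include hT2 in
lemma one_le_and_inner_eq_of_stepSize {v : H} {s : ℝ}
    (hs : (T v ≠ v → s = 1 / 2 + (‖v‖ ^ 2 - ‖T v‖ ^ 2) / (2 * ‖v - T v‖ ^ 2)) ∧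
      (T v = v → s = 1)) :
    1 ≤ s ∧ ⟪v, v - T v⟫ = s * ‖v - T v‖ ^ 2 := by
  by_cases hfix : T v = v
  · simp [hs.2 hfix, hfix]
  have hne : ‖v - T v‖ ≠ 0 := norm_ne_zero_iff.2 (sub_ne_zero.2 (Ne.symm hfix))
  have hexp := norm_sub_sq_real v (T v)
  have hTv : ‖T v‖ ^ 2 ≤ ⟪v, T v⟫ := real_inner_comm v (T v) ▸ hT2 v
  have hsd : s * ‖v - T v‖ ^ 2 = ⟪v, v - T v⟫ := by
    rw [hs.1 hfix, inner_sub_right, real_inner_self_eq_norm_sq]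
    field_simp
    linarith
  refine ⟨le_of_mul_le_mul_right (a := ‖v - T v‖ ^ 2) ?_ (by positivity), hsd.symm⟩
  rw [hsd, one_mul, inner_sub_right, real_inner_self_eq_norm_sq]
  linarith

include hT hT2 in
theorem norm_le_norm_pow_of_overrelaxed {x : H} {v : ℕ → H} {s : ℕ → ℝ} (hv0 : v 0 = T x)
    (hv : ∀ k, v (k + 1) = v k + s k • (T (v k) - v k))
    (hs : ∀ k, 1 ≤ s k ∧ ⟪v k, v k - T (v k)⟫ = s k * ‖v k - T (v k)‖ ^ 2) (k : ℕ) :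
    ‖v k‖ ≤ ‖(T ^ (k + 1)) x‖ := by
  suffices h : ∀ j, ‖(T ^ j) (v k)‖ ≤ ‖(T ^ (j + k + 1)) x‖ by simpa using h 0
  induction k with
  | zero =>
    intro j
    rw [hv0, ← Module.End.mul_apply, ← pow_succ]
  | succ k ih =>
    intro j
    calc ‖(T ^ j) (v (k + 1))‖ ≤ ‖(T ^ (j + 1)) (v k)‖ := by
          rw [hv]; exact norm_pow_apply_add_smul_le hT hT2 (hs k).1 (hs k).2 j
      _ ≤ ‖(T ^ (j + (k + 1) + 1)) x‖ := by
          rw [show j + (k + 1) + 1 = j + 1 + k + 1 by ring]; exact ih (j + 1)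

end Core

end

theorem accelerated_symmetric_cyclic_projections_general
    {H : Type*} [NormedAddCommGroup H] [InnerProductSpace ℝ H] [CompleteSpace H]
    (n : ℕ) (hn : 1 ≤ n)
    (M : ℕ → AffineSubspace ℝ H)
    (hclosed : ∀ i ∈ Finset.Icc 1 n, IsClosed (M i : Set H))
    (P : ℕ → H → H)
    (hP : ∀ i ∈ Finset.Icc 1 n, IsProjOn (M i : Set H) (P i))
    (PM : H → H)
    (hPM : IsProjOn (⋂ i ∈ Finset.Icc 1 n, (M i : Set H)) PM)
    (S : ℕ → H → H)
    (hS0 : S 0 = id)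
    (hS1 : ∀ i, 1 ≤ i → i ≤ n → S i = P i ∘ S (i - 1))
    (hS2 : ∀ i, n + 1 ≤ i → i ≤ 2 * n - 1 → S i = P (2 * n - i) ∘ S (i - 1))
    (x0 : H) (z : ℕ → H) (s : ℕ → ℝ)
    (hz0 : z 0 = S (2 * n - 1) x0)
    (hs : ∀ k, (S (2 * n - 1) (z k) ≠ z k →
        s k = 1 / 2 + (∑ i ∈ Finset.Icc 1 (2 * n - 1), ‖S (i - 1) (z k) - S i (z k)‖ ^ 2)
          / (2 * ‖z k - S (2 * n - 1) (z k)‖ ^ 2)) ∧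
      (S (2 * n - 1) (z k) = z k → s k = 1))
    (hz : ∀ k, z (k + 1) = z k + s k • (S (2 * n - 1) (z k) - z k)) :
    ∀ k : ℕ, ‖z k - PM x0‖ ≤ ‖(S (2 * n - 1))^[k + 1] x0 - PM x0‖ := by
  set m := PM x0
  have hmM : ∀ i ∈ Icc 1 n, m ∈ M i := fun i hi => by
    simpa using Set.mem_iInter₂.1 (hPM x0).1 i hi
  choose! Q hQ hPQ using fun i hi =>
    (hP i hi).exists_isSymmetricProjection (hclosed i hi) (hmM i hi)
  set R : ℕ → Module.End ℝ H := fun i => Q (symmIndex n i)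
  have hR : ∀ i ∈ Icc 1 (2 * n - 1), (R i).IsSymmetricProjection := fun i hi =>
    hQ _ (symmIndex_mem_Icc hi)
  have hSR : ∀ i ≤ 2 * n - 1, ∀ w, S i (m + w) = m + leftPartialProd R i w :=
    apply_add_eq_leftPartialProd hS0 (comp_symmIndex_of_comp hS1 hS2) fun i hi =>
      hPQ _ (symmIndex_mem_Icc hi)
  set T := leftPartialProd R (2 * n - 1)
  obtain ⟨hT, hT2⟩ := isSymmetric_and_norm_sq_le_inner_of_palindrome hn hR fun i hi => by
    simp only [R, symmIndex_two_mul_sub hi]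
  have hST : ∀ w, S (2 * n - 1) (m + w) = m + T w := hSR _ le_rfl
  obtain ⟨v, rfl⟩ : ∃ v : ℕ → H, z = fun k => m + v k :=
    ⟨fun k => z k - m, by simp only [add_sub_cancel]⟩
  simp only [hST, sum_norm_sub_sq_of_apply_add_eq hR hSR, add_sub_add_left_eq_sub, add_assoc,
    add_right_inj, ne_eq] at hz0 hs hz
  have hv0 : v 0 = T (x0 - m) := by rw [← add_right_inj m, hz0, ← hST, add_sub_cancel]
  intro k
  rw [iterate_apply_eq_add_pow_apply hST, add_sub_cancel_left, add_sub_cancel_left]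
  exact norm_le_norm_pow_of_overrelaxed hT hT2 hv0 hz
    (fun k => one_le_and_inner_eq_of_stepSize hT2 (hs k)) k

/-- Accelerated symmetric cyclic projections for affine subspaces: the accelerated
iterates `zₖ` satisfy `‖zₖ − P_M x₀‖ ≤ ‖S^{k+1} x₀ − P_M x₀‖`, where
`S = P_{M₁} ⋯ P_{M_{n−1}} P_{Mₙ} P_{M_{n−1}} ⋯ P_{M₁}` is the symmetric cyclic
projections operator (with partial compositions `Sᵢ`, `S₀ = I`, `S = S_{2n−1}`). -/
theorem accelerated_symmetric_cyclic_projections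
    {H : Type*} [NormedAddCommGroup H] [InnerProductSpace ℝ H] [CompleteSpace H]
    (n : ℕ) (hn : 1 ≤ n)
    (M : ℕ → AffineSubspace ℝ H)
    (hclosed : ∀ i ∈ Finset.Icc 1 n, IsClosed (M i : Set H))
    (hne : (⋂ i ∈ Finset.Icc 1 n, (M i : Set H)).Nonempty)
    (P : ℕ → H → H)
    (hP : ∀ i ∈ Finset.Icc 1 n, IsProjOn (M i : Set H) (P i))
    (PM : H → H)
    (hPM : IsProjOn (⋂ i ∈ Finset.Icc 1 n, (M i : Set H)) PM)
    (S : ℕ → H → H)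
    (hS0 : S 0 = id)
    (hS1 : ∀ i, 1 ≤ i → i ≤ n → S i = P i ∘ S (i - 1))
    (hS2 : ∀ i, n + 1 ≤ i → i ≤ 2 * n - 1 → S i = P (2 * n - i) ∘ S (i - 1))
    (x0 : H) (z : ℕ → H) (s : ℕ → ℝ)
    (hz0 : z 0 = S (2 * n - 1) x0)
    (hs : ∀ k, (S (2 * n - 1) (z k) ≠ z k →
        s k = 1 / 2 + (∑ i ∈ Finset.Icc 1 (2 * n - 1), ‖S (i - 1) (z k) - S i (z k)‖ ^ 2)
          / (2 * ‖z k - S (2 * n - 1) (z k)‖ ^ 2)) ∧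
      (S (2 * n - 1) (z k) = z k → s k = 1))
    (hz : ∀ k, z (k + 1) = z k + s k • (S (2 * n - 1) (z k) - z k)) :
    ∀ k : ℕ, ‖z k - PM x0‖ ≤ ‖(S (2 * n - 1))^[k + 1] x0 - PM x0‖ :=
  accelerated_symmetric_cyclic_projections_general n hn M hclosed P hP PM hPM S hS0 hS1 hS2 x0 z s
    hz0 hs hz
end

section
/- Let C_1, C_2 be closed affine subspaces of a real Hilbert space H and let T := T_{C_1,C_2} := (1/2)(I + R_{C_2} R_{C_1}) be the Douglas–Rachford operator. Then for all x ∈ H and all y ∈ Fix T, ‖T(x) − y‖² + ‖x − T(x)‖² = ‖x − y‖². -/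
/-!
Projection onto an affine subspace is an orthogonal decomposition `x = P x + (x - P x)`
with `x - P x` orthogonal to the direction of the subspace, so the reflector `2P - I` flips
the orthogonal component and is an isometry; hence so is `U = R₂ R₁`. If `U y = y`, then
`x - y` and `U x - y` have the same norm, and the parallelogram law for these two vectors is
exactly the claimed identity, since `T x - y` and `x - T x` are half their sum and half their
difference.
-/

open scoped RealInnerProductSpace

section

variable {H : Type*} [NormedAddCommGroup H] [InnerProductSpace ℝ H]

namespace IsProjOn

theorem inner_sub_le_zero_s11 {S : Set H} {P : H → H} (hS : Convex ℝ S) (hP : IsProjOn S P)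
    (x : H) {w : H} (hw : w ∈ S) : ⟪x - P x, w - P x⟫ ≤ 0 := by
  have : Nonempty S := ⟨⟨w, hw⟩⟩
  have hmin : ‖x - P x‖ = ⨅ w : S, ‖x - (w : H)‖ :=
    le_antisymm (le_ciInf fun w => (hP x).2 w w.2)
      (ciInf_le ⟨0, by rintro _ ⟨w, rfl⟩; positivity⟩ (⟨P x, (hP x).1⟩ : S))
  exact (norm_eq_iInf_iff_real_inner_le_zero hS (hP x).1).mp hmin w hw

theorem inner_eq_zero_of_mem_direction {S : AffineSubspace ℝ H} {P : H → H}
    (hP : IsProjOn (S : Set H) P) (x : H) {d : H} (hd : d ∈ S.direction) :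
    ⟪x - P x, d⟫ = 0 := by
  have hmem : ∀ e ∈ S.direction, ⟪x - P x, e⟫ ≤ 0 := fun e he => by
    simpa using inner_sub_le_zero_s11 S.convex hP x (S.vadd_mem_of_mem_direction he (hP x).1)
  have hneg := hmem (-d) (S.direction.neg_mem hd)
  rw [inner_neg_right] at hneg
  linarith [hmem d hd]

theorem isometry_reflect {S : AffineSubspace ℝ H} {P : H → H}
    (hP : IsProjOn (S : Set H) P) : Isometry fun x => (2 : ℝ) • P x - x := by
  refine Isometry.of_dist_eq fun x x' => ?_
  simp only [dist_eq_norm]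
  have hx : x - x' = (P x - P x') + ((x - P x) - (x' - P x')) := by abel
  have hRx : (2 : ℝ) • P x - x - ((2 : ℝ) • P x' - x') =
      (P x - P x') - ((x - P x) - (x' - P x')) := by module
  set a := P x - P x'
  set b := (x - P x) - (x' - P x')
  have ha : a ∈ S.direction := S.vsub_mem_direction (hP x).1 (hP x').1
  have hab : ⟪b, a⟫ = 0 := by
    rw [inner_sub_left, hP.inner_eq_zero_of_mem_direction x ha,
      hP.inner_eq_zero_of_mem_direction x' ha, sub_zero]
  rw [hx, hRx, ← sq_eq_sq₀ (norm_nonneg _) (norm_nonneg _), norm_sub_sq_real,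
    norm_add_sq_real, real_inner_comm, hab]
  ring

end IsProjOn

theorem Isometry.norm_average_sub_fixedPoint_sq {U : H → H} (hU : Isometry U) {y : H}
    (hy : U y = y) (x : H) :
    ‖((1 : ℝ) / 2) • (x + U x) - y‖ ^ 2 + ‖x - ((1 : ℝ) / 2) • (x + U x)‖ ^ 2 =
      ‖x - y‖ ^ 2 := by
  have hnorm : ‖U x - y‖ = ‖x - y‖ := by simpa [dist_eq_norm, hy] using hU.dist_eq x y
  have hpar := parallelogram_law_with_norm ℝ (x - y) (U x - y)
  calc ‖((1 : ℝ) / 2) • (x + U x) - y‖ ^ 2 + ‖x - ((1 : ℝ) / 2) • (x + U x)‖ ^ 2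
      = ‖((1 : ℝ) / 2) • ((x - y) + (U x - y))‖ ^ 2
          + ‖((1 : ℝ) / 2) • ((x - y) - (U x - y))‖ ^ 2 := by congr 3 <;> module
    _ = (‖(x - y) + (U x - y)‖ ^ 2 + ‖(x - y) - (U x - y)‖ ^ 2) / 4 := by
      rw [norm_smul, norm_smul]; norm_num; ring
    _ = ‖x - y‖ ^ 2 := by rw [hpar, hnorm]; ring

theorem eq_of_average_eq_self {y z : H} (h : ((1 : ℝ) / 2) • (y + z) = y) : z = y := by
  calc z = (2 : ℝ) • (((1 : ℝ) / 2) • (y + z)) - y := by module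
    _ = y := by rw [h]; module

end

theorem douglas_rachford_affine_equality_general
    {H : Type*} [NormedAddCommGroup H] [InnerProductSpace ℝ H]
    (C1 C2 : AffineSubspace ℝ H)
    (P1 P2 : H → H)
    (hP1 : IsProjOn (C1 : Set H) P1) (hP2 : IsProjOn (C2 : Set H) P2)
    (R1 R2 : H → H)
    (hR1 : ∀ x, R1 x = (2 : ℝ) • P1 x - x) (hR2 : ∀ x, R2 x = (2 : ℝ) • P2 x - x)
    (T : H → H)
    (hT : ∀ x, T x = ((1 : ℝ) / 2) • (x + R2 (R1 x))) :
    ∀ x y : H, T y = y → ‖T x - y‖ ^ 2 + ‖x - T x‖ ^ 2 = ‖x - y‖ ^ 2 := by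
  intro x y hy
  have hU : Isometry (R2 ∘ R1) := by
    rw [funext hR1, funext hR2]
    exact hP2.isometry_reflect.comp hP1.isometry_reflect
  have hfix : (R2 ∘ R1) y = y := eq_of_average_eq_self ((hT y).symm.trans hy)
  rw [hT x]
  exact hU.norm_average_sub_fixedPoint_sq hfix x

/-- The Douglas–Rachford operator `T = ½(I + R_{C₂} R_{C₁})` for closed affine
subspaces `C₁, C₂` satisfies `‖T x − y‖² + ‖x − T x‖² = ‖x − y‖²` for every `x ∈ H`
and every fixed point `y` of `T`. -/
theorem douglas_rachford_affine_equality
    {H : Type*} [NormedAddCommGroup H] [InnerProductSpace ℝ H] [CompleteSpace H]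
    (C1 C2 : AffineSubspace ℝ H)
    (hC1 : IsClosed (C1 : Set H)) (hC2 : IsClosed (C2 : Set H))
    (hC1ne : (C1 : Set H).Nonempty) (hC2ne : (C2 : Set H).Nonempty)
    (P1 P2 : H → H)
    (hP1 : IsProjOn (C1 : Set H) P1) (hP2 : IsProjOn (C2 : Set H) P2)
    (R1 R2 : H → H)
    (hR1 : ∀ x, R1 x = (2 : ℝ) • P1 x - x) (hR2 : ∀ x, R2 x = (2 : ℝ) • P2 x - x)
    (T : H → H)
    (hT : ∀ x, T x = ((1 : ℝ) / 2) • (x + R2 (R1 x))) :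
    ∀ x y : H, T y = y → ‖T x - y‖ ^ 2 + ‖x - T x‖ ^ 2 = ‖x - y‖ ^ 2 :=
  douglas_rachford_affine_equality_general C1 C2 P1 P2 hP1 hP2 R1 R2 hR1 hR2 T hT
end

section
/- Let T_1, ..., T_n : H → H be firmly quasi-nonexpansive operators on a real Hilbert space H with m ∈ ∩_{i=1}^n Fix T_i. Let Q := T_n ⋯ T_1, Q_i := T_i ⋯ T_1 for i ∈ {1,...,n}, and Q_0 := I. Then for every x ∈ H, ⟨x − Q(x), m⟩ ≤ (1/2)‖x‖² − (1/2)‖Q(x)‖² − (1/2) Σ_{i=1}^n ‖Q_{i−1}(x) − Q_i(x)‖². -/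
/-!
Applying `T i` to `Q (i - 1) x` with the common fixed point `m` gives
`‖Q i x - m‖² + ‖Q (i - 1) x - Q i x‖² ≤ ‖Q (i - 1) x - m‖²`. Telescoping these from `i = 1` to `n`
bounds `‖Q n x - m‖² + Σ ‖Q (i - 1) x - Q i x‖²` by `‖x - m‖²`, and expanding both squares,
`‖x - m‖² - ‖Q n x - m‖² = ‖x‖² - ‖Q n x‖² - 2 ⟪x - Q n x, m⟫`.
-/

open RealInnerProductSpace

def FirmlyQuasiNonexpansive {H : Type*} [NormedAddCommGroup H] [InnerProductSpace ℝ H]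
    (T : H → H) : Prop :=
  ∀ x y : H, T y = y → ‖T x - y‖ ^ 2 + ‖x - T x‖ ^ 2 ≤ ‖x - y‖ ^ 2

theorem add_sum_range_le_of_succ_add_le {α : Type*} [AddCommGroup α] [PartialOrder α]
    [IsOrderedAddMonoid α] {a d : ℕ → α} {n : ℕ} (h : ∀ k < n, a (k + 1) + d k ≤ a k) :
    a n + ∑ k ∈ Finset.range n, d k ≤ a 0 := by
  induction n with
  | zero => simp
  | succ n ih =>
    calc a (n + 1) + ∑ k ∈ Finset.range (n + 1), d k
        = (a (n + 1) + d n) + ∑ k ∈ Finset.range n, d k := by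
          rw [Finset.sum_range_succ]; abel
      _ ≤ a n + ∑ k ∈ Finset.range n, d k := by gcongr; exact h n n.lt_succ_self
      _ ≤ a 0 := ih fun k hk => h k (hk.trans n.lt_succ_self)

theorem Finset.sum_Icc_one_pred_eq_sum_range {M : Type*} [AddCommMonoid M]
    (f : ℕ → ℕ → M) (n : ℕ) :
    ∑ i ∈ Finset.Icc 1 n, f (i - 1) i = ∑ k ∈ Finset.range n, f k (k + 1) := by
  rw [← Finset.Ico_add_one_right_eq_Icc, Finset.sum_Ico_eq_sum_range]
  simp [add_comm 1]

theorem inner_sub_le_of_norm_sub_sq_add_le {H : Type*} [NormedAddCommGroup H]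
    [InnerProductSpace ℝ H] {x y m : H} {s : ℝ} (h : ‖y - m‖ ^ 2 + s ≤ ‖x - m‖ ^ 2) :
    ⟪x - y, m⟫ ≤ (1 / 2) * ‖x‖ ^ 2 - (1 / 2) * ‖y‖ ^ 2 - (1 / 2) * s := by
  rw [norm_sub_sq_real, norm_sub_sq_real] at h
  rw [inner_sub_left]
  linarith

theorem fqne_inner_bound_general
    {H : Type*} [NormedAddCommGroup H] [InnerProductSpace ℝ H]
    (n : ℕ)
    (T : ℕ → H → H)
    (hT : ∀ i ∈ Finset.Icc 1 n, FirmlyQuasiNonexpansive (T i))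
    (m : H) (hm : ∀ i ∈ Finset.Icc 1 n, T i m = m)
    (Q : ℕ → H → H)
    (hQ0 : Q 0 = id)
    (hQ : ∀ i, 1 ≤ i → i ≤ n → Q i = T i ∘ Q (i - 1))
    (x : H) :
    ⟪x - Q n x, m⟫
      ≤ (1 / 2) * ‖x‖ ^ 2 - (1 / 2) * ‖Q n x‖ ^ 2
        - (1 / 2) * ∑ i ∈ Finset.Icc 1 n, ‖Q (i - 1) x - Q i x‖ ^ 2 := by
  have step : ∀ k < n, ‖Q (k + 1) x - m‖ ^ 2 + ‖Q k x - Q (k + 1) x‖ ^ 2 ≤ ‖Q k x - m‖ ^ 2 := by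
    intro k hk
    have hk' : k + 1 ∈ Finset.Icc 1 n := Finset.mem_Icc.2 ⟨k.succ_pos, hk⟩
    rw [hQ (k + 1) k.succ_pos hk, Function.comp_apply, Nat.add_sub_cancel]
    exact hT _ hk' _ _ (hm _ hk')
  apply inner_sub_le_of_norm_sub_sq_add_le
  rw [Finset.sum_Icc_one_pred_eq_sum_range fun i j => ‖Q i x - Q j x‖ ^ 2]
  simpa only [hQ0, id] using add_sum_range_le_of_succ_add_le
    (a := fun k => ‖Q k x - m‖ ^ 2) (d := fun k => ‖Q k x - Q (k + 1) x‖ ^ 2) step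

/-- For firmly quasi-nonexpansive operators `T₁, …, Tₙ` with common fixed point `m`,
`Q = Tₙ ⋯ T₁`, partial compositions `Qᵢ = Tᵢ ⋯ T₁` (`Q₀ = I`):
`⟨x − Q x, m⟩ ≤ ½‖x‖² − ½‖Q x‖² − ½ Σᵢ ‖Q_{i−1} x − Qᵢ x‖²`. -/
theorem fqne_inner_bound
    {H : Type*} [NormedAddCommGroup H] [InnerProductSpace ℝ H]
    (n : ℕ) (hn : 1 ≤ n)
    (T : ℕ → H → H)
    (hT : ∀ i ∈ Finset.Icc 1 n, FirmlyQuasiNonexpansive (T i))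
    (m : H) (hm : ∀ i ∈ Finset.Icc 1 n, T i m = m)
    (Q : ℕ → H → H)
    (hQ0 : Q 0 = id)
    (hQ : ∀ i, 1 ≤ i → i ≤ n → Q i = T i ∘ Q (i - 1))
    (x : H) :
    ⟪x - Q n x, m⟫
      ≤ (1 / 2) * ‖x‖ ^ 2 - (1 / 2) * ‖Q n x‖ ^ 2
        - (1 / 2) * ∑ i ∈ Finset.Icc 1 n, ‖Q (i - 1) x - Q i x‖ ^ 2 :=
  fqne_inner_bound_general n T hT m hm Q hQ0 hQ x
end

section
/- Let T_1, ..., T_n : H → H be firmly quasi-nonexpansive operators on a real Hilbert space H with m ∈ ∩_{i=1}^n Fix T_i. Let Q := T_n ⋯ T_1, Q_i := T_i ⋯ T_1 for i ∈ {1,...,n}, and Q_0 := I. Fix x_k ∈ H with Q(x_k) ≠ x_k. Then the unique minimiser t ∈ ℝ of ‖x_k + t(Q(x_k) − x_k) − m‖² satisfies t ≥ 1/2 + (Σ_{i=1}^n ‖Q_{i−1}(x_k) − Q_i(x_k)‖²)/(2‖x_k − Q(x_k)‖²). Moreover, if each T_i satisfies ‖T_i(x) − y‖² + ‖x − T_i(x)‖²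 = ‖x − y‖² for all x ∈ H and y ∈ Fix T_i, then this inequality holds with equality. -/
/-! Exact line search along `d = Q xₖ − xₖ` from `xₖ` with respect to `m` gives the step
`t = ½ + (‖xₖ − m‖² − ‖Q xₖ − m‖²) / (2‖d‖²)`, by expanding the quadratic `s ↦ ‖xₖ − m + s d‖²`.
Along the orbit `Q₀ xₖ, …, Qₙ xₖ` each `Tᵢ` lowers the squared distance to `m` by at least
`‖Q_{i−1} xₖ − Qᵢ xₖ‖²` (exactly that much in the equality case), so the numerator telescopes
to at least (exactly) `∑ᵢ ‖Q_{i−1} xₖ − Qᵢ xₖ‖²`. -/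

open scoped RealInnerProductSpace

section Telescoping

variable {α : Type*} [AddCommGroup α]

theorem sum_Icc_le_sub_of_add_le [PartialOrder α] [IsOrderedAddMonoid α] (f g : ℕ → α)
    (n : ℕ) (h : ∀ k < n, f (k + 1) + g (k + 1) ≤ f k) :
    ∑ i ∈ Finset.Icc 1 n, g i ≤ f 0 - f n := by
  induction n with
  | zero => simp
  | succ n ih =>
    rw [Finset.sum_Icc_succ_top (by omega)]
    calc ∑ i ∈ Finset.Icc 1 n, g i + g (n + 1)
        ≤ (f 0 - f n) + (f n - f (n + 1)) :=
          add_le_add (ih fun k hk => h k (by omega)) (le_sub_iff_add_le'.mpr (h n n.lt_succ_self))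
      _ = f 0 - f (n + 1) := by abel

theorem sum_Icc_eq_sub_of_add_eq (f g : ℕ → α) (n : ℕ)
    (h : ∀ k < n, f (k + 1) + g (k + 1) = f k) :
    ∑ i ∈ Finset.Icc 1 n, g i = f 0 - f n := by
  induction n with
  | zero => simp
  | succ n ih =>
    rw [Finset.sum_Icc_succ_top (by omega), ih fun k hk => h k (by omega),
      eq_sub_of_add_eq' (h n n.lt_succ_self)]
    abel

end Telescoping

section LineSearch

variable {H : Type*} [NormedAddCommGroup H] [InnerProductSpace ℝ H]

theorem norm_add_smul_sq (u d : H) (s : ℝ) :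
    ‖u + s • d‖ ^ 2 = ‖u‖ ^ 2 + 2 * s * ⟪u, d⟫ + s ^ 2 * ‖d‖ ^ 2 := by
  rw [norm_add_sq_real, real_inner_smul_right, norm_smul, mul_pow, Real.norm_eq_abs, sq_abs]
  ring

theorem mul_norm_sq_eq_neg_inner_of_forall_le {u d : H} (hd : d ≠ 0) {t : ℝ}
    (ht : ∀ s : ℝ, ‖u + t • d‖ ^ 2 ≤ ‖u + s • d‖ ^ 2) :
    t * ‖d‖ ^ 2 = -⟪u, d⟫ := by
  have hpos : 0 < ‖d‖ ^ 2 := by positivity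
  have hvertex := ht (-⟪u, d⟫ / ‖d‖ ^ 2)
  rw [norm_add_smul_sq, norm_add_smul_sq] at hvertex
  have hsq : (t * ‖d‖ ^ 2 + ⟪u, d⟫) ^ 2 = ‖d‖ ^ 2 * ((‖u‖ ^ 2 + 2 * t * ⟪u, d⟫ + t ^ 2 * ‖d‖ ^ 2)
      - (‖u‖ ^ 2 + 2 * (-⟪u, d⟫ / ‖d‖ ^ 2) * ⟪u, d⟫ + (-⟪u, d⟫ / ‖d‖ ^ 2) ^ 2 * ‖d‖ ^ 2)) := by
    field_simp
    ring
  have hzero : (t * ‖d‖ ^ 2 + ⟪u, d⟫) ^ 2 = 0 :=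
    le_antisymm (hsq ▸ mul_nonpos_of_nonneg_of_nonpos hpos.le (by linarith)) (sq_nonneg _)
  linarith [pow_eq_zero_iff two_ne_zero |>.mp hzero]

theorem eq_half_add_of_forall_le {x y m : H} (hxy : y ≠ x) {t : ℝ}
    (ht : ∀ s : ℝ, ‖x + t • (y - x) - m‖ ^ 2 ≤ ‖x + s • (y - x) - m‖ ^ 2) :
    t = 1 / 2 + (‖x - m‖ ^ 2 - ‖y - m‖ ^ 2) / (2 * ‖x - y‖ ^ 2) := by
  simp only [add_sub_right_comm x _ m] at ht
  have hmin := mul_norm_sq_eq_neg_inner_of_forall_le (sub_ne_zero.mpr hxy) ht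
  have hy := norm_add_smul_sq (x - m) (y - x) 1
  rw [one_smul, sub_add_sub_cancel'] at hy
  have hne : ‖y - x‖ ≠ 0 := norm_ne_zero_iff.mpr (sub_ne_zero.mpr hxy)
  rw [norm_sub_rev x y, hy, eq_comm, ← sub_eq_zero]
  field_simp
  linear_combination -2 * hmin

end LineSearch

theorem fqne_step_size_lower_bound_general
    {H : Type*} [NormedAddCommGroup H] [InnerProductSpace ℝ H]
    (n : ℕ)
    (T : ℕ → H → H)
    (hT : ∀ i ∈ Finset.Icc 1 n, FirmlyQuasiNonexpansive (T i))
    (m : H) (hm : ∀ i ∈ Finset.Icc 1 n, T i m = m)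
    (Q : ℕ → H → H)
    (hQ0 : Q 0 = id)
    (hQ : ∀ i, 1 ≤ i → i ≤ n → Q i = T i ∘ Q (i - 1))
    (xk : H) (hxk : Q n xk ≠ xk) :
    (∀ t : ℝ, (∀ s : ℝ, ‖xk + t • (Q n xk - xk) - m‖ ^ 2
          ≤ ‖xk + s • (Q n xk - xk) - m‖ ^ 2) →
        1 / 2 + (∑ i ∈ Finset.Icc 1 n, ‖Q (i - 1) xk - Q i xk‖ ^ 2)
          / (2 * ‖xk - Q n xk‖ ^ 2) ≤ t) ∧
    ((∀ i ∈ Finset.Icc 1 n, ∀ x y : H, T i y = y →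
        ‖T i x - y‖ ^ 2 + ‖x - T i x‖ ^ 2 = ‖x - y‖ ^ 2) →
      ∀ t : ℝ, (∀ s : ℝ, ‖xk + t • (Q n xk - xk) - m‖ ^ 2
          ≤ ‖xk + s • (Q n xk - xk) - m‖ ^ 2) →
        t = 1 / 2 + (∑ i ∈ Finset.Icc 1 n, ‖Q (i - 1) xk - Q i xk‖ ^ 2)
          / (2 * ‖xk - Q n xk‖ ^ 2)) := by
  have hmem {k : ℕ} (hk : k < n) : k + 1 ∈ Finset.Icc 1 n := Finset.mem_Icc.mpr ⟨by omega, hk⟩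
  have horbit {k : ℕ} (hk : k < n) : Q (k + 1) xk = T (k + 1) (Q k xk) := by
    rw [hQ (k + 1) (by omega) hk]
    rfl
  have hQ0xk : Q 0 xk = xk := congrFun hQ0 xk
  constructor
  · intro t ht
    have htele := sum_Icc_le_sub_of_add_le (fun k => ‖Q k xk - m‖ ^ 2)
      (fun i => ‖Q (i - 1) xk - Q i xk‖ ^ 2) n fun k hk => by
        simpa only [Nat.add_sub_cancel, horbit hk] using hT _ (hmem hk) (Q k xk) m (hm _ (hmem hk))
    rw [hQ0xk] at htele
    rw [eq_half_add_of_forall_le hxk ht]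
    gcongr
  · intro hEq t ht
    have htele := sum_Icc_eq_sub_of_add_eq (fun k => ‖Q k xk - m‖ ^ 2)
      (fun i => ‖Q (i - 1) xk - Q i xk‖ ^ 2) n fun k hk => by
        simpa only [Nat.add_sub_cancel, horbit hk] using hEq _ (hmem hk) (Q k xk) m (hm _ (hmem hk))
    rw [hQ0xk] at htele
    rw [eq_half_add_of_forall_le hxk ht, htele]

/-- Lower bound on the exact line-search step size for compositions of firmly
quasi-nonexpansive operators: the unique minimiser `t` of
`‖xₖ + t (Q xₖ − xₖ) − m‖²` satisfies
`t ≥ ½ + (Σᵢ ‖Q_{i−1} xₖ − Qᵢ xₖ‖²)/(2 ‖xₖ − Q xₖ‖²)`, with equality when each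
`Tᵢ` satisfies the firm quasi-nonexpansiveness inequality with equality. -/
theorem fqne_step_size_lower_bound
    {H : Type*} [NormedAddCommGroup H] [InnerProductSpace ℝ H]
    (n : ℕ) (hn : 1 ≤ n)
    (T : ℕ → H → H)
    (hT : ∀ i ∈ Finset.Icc 1 n, FirmlyQuasiNonexpansive (T i))
    (m : H) (hm : ∀ i ∈ Finset.Icc 1 n, T i m = m)
    (Q : ℕ → H → H)
    (hQ0 : Q 0 = id)
    (hQ : ∀ i, 1 ≤ i → i ≤ n → Q i = T i ∘ Q (i - 1))
    (xk : H) (hxk : Q n xk ≠ xk) :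
    (∀ t : ℝ, (∀ s : ℝ, ‖xk + t • (Q n xk - xk) - m‖ ^ 2
          ≤ ‖xk + s • (Q n xk - xk) - m‖ ^ 2) →
        1 / 2 + (∑ i ∈ Finset.Icc 1 n, ‖Q (i - 1) xk - Q i xk‖ ^ 2)
          / (2 * ‖xk - Q n xk‖ ^ 2) ≤ t) ∧
    ((∀ i ∈ Finset.Icc 1 n, ∀ x y : H, T i y = y →
        ‖T i x - y‖ ^ 2 + ‖x - T i x‖ ^ 2 = ‖x - y‖ ^ 2) →
      ∀ t : ℝ, (∀ s : ℝ, ‖xk + t • (Q n xk - xk) - m‖ ^ 2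
          ≤ ‖xk + s • (Q n xk - xk) - m‖ ^ 2) →
        t = 1 / 2 + (∑ i ∈ Finset.Icc 1 n, ‖Q (i - 1) xk - Q i xk‖ ^ 2)
          / (2 * ‖xk - Q n xk‖ ^ 2)) :=
  fqne_step_size_lower_bound_general n T hT m hm Q hQ0 hQ xk hxk
end

section
/- Let M_1', M_2' be closed linear subspaces of a real Hilbert space H and let T' := T_{M_2',M_1'} T_{M_1',M_2'}, where T_{C_1,C_2} := (1/2)(I + R_{C_2} R_{C_1}). Then T' is self-adjoint and nonnegative, i.e., (T')* = T' and ⟨x, T'(x)⟩ ≥ 0 for all x ∈ H. -/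
open RealInnerProductSpace

/-! A map choosing nearest points in a subspace leaves residuals `x - Px` orthogonal to it, so it
is self-adjoint, and so are the reflectors `R = 2P - I`. Hence `T_{M₂',M₁'} = ½(I + R₁R₂)` is the
adjoint of `T_{M₁',M₂'} = ½(I + R₂R₁)`, and `T' = T_{M₁',M₂'}* T_{M₁',M₂'}` is self-adjoint and
nonnegative. -/

section NearestPoint

variable {𝕜 E : Type*} [RCLike 𝕜] [NormedAddCommGroup E] [InnerProductSpace 𝕜 E]
  {K : Submodule 𝕜 E}

theorem inner_sub_eq_zero_of_forall_norm_sub_le {u v : E} (hv : v ∈ K)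
    (hmin : ∀ w ∈ K, ‖u - v‖ ≤ ‖u - w‖) {w : E} (hw : w ∈ K) : inner 𝕜 (u - v) w = 0 := by
  refine (K.norm_eq_iInf_iff_inner_eq_zero hv).1 (le_antisymm ?_ ?_) w hw
  · exact le_ciInf fun w => hmin w w.2
  · exact ciInf_le ⟨0, fun _ ⟨w, hw⟩ => hw ▸ norm_nonneg _⟩ (⟨v, hv⟩ : K)

theorem LinearMap.isSymmetric_of_forall_norm_sub_le (P : E →ₗ[𝕜] E)
    (hP : ∀ x, P x ∈ K ∧ ∀ y ∈ K, ‖x - P x‖ ≤ ‖x - y‖) : P.IsSymmetric := by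
  have orth (x y : E) : inner 𝕜 (x - P x) (P y) = 0 :=
    inner_sub_eq_zero_of_forall_norm_sub_le (hP x).1 (hP x).2 (hP y).1
  intro x y
  calc inner 𝕜 (P x) y = inner 𝕜 (P x) (P y) := by
        rw [← sub_eq_zero, ← inner_sub_right, ← inner_conj_symm, orth, map_zero]
    _ = inner 𝕜 x (P y) := by rw [eq_comm, ← sub_eq_zero, ← inner_sub_left, orth]

end NearestPoint

namespace ContinuousLinearMap

variable {H : Type*} [NormedAddCommGroup H] [InnerProductSpace ℝ H] [CompleteSpace H]

theorem isSelfAdjoint_of_apply_eq_two_smul_sub {P R : H →L[ℝ] H} (hP : IsSelfAdjoint P)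
    (hR : ∀ x, R x = (2 : ℝ) • P x - x) : IsSelfAdjoint R := by
  have hR' : R = (2 : ℝ) • P - 1 := ext fun x => hR x
  rw [hR']
  exact ((IsSelfAdjoint.all (2 : ℝ)).smul hP).sub (.one _)

theorem adjoint_eq_of_apply_eq_half_smul_add {R1 R2 T12 T21 : H →L[ℝ] H}
    (hR1 : IsSelfAdjoint R1) (hR2 : IsSelfAdjoint R2)
    (hT12 : ∀ x, T12 x = ((1 : ℝ) / 2) • (x + R2 (R1 x)))
    (hT21 : ∀ x, T21 x = ((1 : ℝ) / 2) • (x + R1 (R2 x))) :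
    adjoint T12 = T21 := by
  have hT12' : T12 = ((1 : ℝ) / 2) • (1 + R2 * R1) := ext fun x => hT12 x
  have hT21' : T21 = ((1 : ℝ) / 2) • (1 + R1 * R2) := ext fun x => hT21 x
  rw [hT12', hT21', ← star_eq_adjoint, star_smul, star_add, star_one, star_mul, hR1.star_eq,
    hR2.star_eq, star_trivial]

end ContinuousLinearMap

theorem symmetric_dr_self_adjoint_nonneg_general
    {H : Type*} [NormedAddCommGroup H] [InnerProductSpace ℝ H] [CompleteSpace H]
    (M1' M2' : Submodule ℝ H)
    (P1 P2 : H →L[ℝ] H)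
    (hP1 : ∀ x : H, P1 x ∈ M1' ∧ ∀ y ∈ M1', ‖x - P1 x‖ ≤ ‖x - y‖)
    (hP2 : ∀ x : H, P2 x ∈ M2' ∧ ∀ y ∈ M2', ‖x - P2 x‖ ≤ ‖x - y‖)
    (R1 R2 : H →L[ℝ] H)
    (hR1 : ∀ x, R1 x = (2 : ℝ) • P1 x - x) (hR2 : ∀ x, R2 x = (2 : ℝ) • P2 x - x)
    (T12 T21 : H →L[ℝ] H)
    (hT12 : ∀ x, T12 x = ((1 : ℝ) / 2) • (x + R2 (R1 x)))
    (hT21 : ∀ x, T21 x = ((1 : ℝ) / 2) • (x + R1 (R2 x))) :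
    ContinuousLinearMap.adjoint (T21.comp T12) = T21.comp T12 ∧
      ∀ x : H, 0 ≤ ⟪x, (T21.comp T12) x⟫ := by
  have hP1sa : IsSelfAdjoint P1 :=
    (LinearMap.isSymmetric_of_forall_norm_sub_le (P1 : H →ₗ[ℝ] H) hP1).isSelfAdjoint
  have hP2sa : IsSelfAdjoint P2 :=
    (LinearMap.isSymmetric_of_forall_norm_sub_le (P2 : H →ₗ[ℝ] H) hP2).isSelfAdjoint
  have hT : ContinuousLinearMap.adjoint T12 = T21 :=
    ContinuousLinearMap.adjoint_eq_of_apply_eq_half_smul_add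
      (ContinuousLinearMap.isSelfAdjoint_of_apply_eq_two_smul_sub hP1sa hR1)
      (ContinuousLinearMap.isSelfAdjoint_of_apply_eq_two_smul_sub hP2sa hR2) hT12 hT21
  have hpos := ContinuousLinearMap.isPositive_adjoint_comp_self T12
  rw [hT] at hpos
  exact ⟨hpos.isSelfAdjoint.adjoint_eq, hpos.inner_nonneg_right⟩

/-- For closed linear subspaces `M₁', M₂'` of a real Hilbert space, the symmetrised
Douglas–Rachford operator `T' = T_{M₂',M₁'} T_{M₁',M₂'}` is self-adjoint and
nonnegative. -/
theorem symmetric_dr_self_adjoint_nonneg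
    {H : Type*} [NormedAddCommGroup H] [InnerProductSpace ℝ H] [CompleteSpace H]
    (M1' M2' : Submodule ℝ H)
    (hM1 : IsClosed (M1' : Set H)) (hM2 : IsClosed (M2' : Set H))
    (P1 P2 : H →L[ℝ] H)
    (hP1 : ∀ x : H, P1 x ∈ M1' ∧ ∀ y ∈ M1', ‖x - P1 x‖ ≤ ‖x - y‖)
    (hP2 : ∀ x : H, P2 x ∈ M2' ∧ ∀ y ∈ M2', ‖x - P2 x‖ ≤ ‖x - y‖)
    (R1 R2 : H →L[ℝ] H)
    (hR1 : ∀ x, R1 x = (2 : ℝ) • P1 x - x) (hR2 : ∀ x, R2 x = (2 : ℝ) • P2 x - x)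
    (T12 T21 : H →L[ℝ] H)
    (hT12 : ∀ x, T12 x = ((1 : ℝ) / 2) • (x + R2 (R1 x)))
    (hT21 : ∀ x, T21 x = ((1 : ℝ) / 2) • (x + R1 (R2 x))) :
    ContinuousLinearMap.adjoint (T21.comp T12) = T21.comp T12 ∧
      ∀ x : H, 0 ≤ ⟪x, (T21.comp T12) x⟫ :=
  symmetric_dr_self_adjoint_nonneg_general M1' M2' P1 P2 hP1 hP2 R1 R2 hR1 hR2 T12 T21 hT12 hT21
end

section
/- Let M_1, M_2 be closed affine subspaces of a real Hilbert space H with M_1 ∩ M_2 nonempty, with parallel linear subspaces M_1', M_2'. Let T := T_{M_2,M_1} T_{M_1,M_2}, where T_{C_1,C_2} := (1/2)(I + R_{C_2} R_{C_1}). Then Fix T = Fix T_{M_1,M_2} ∩ Fix T_{M_2,M_1} = M_1 ∩ M_2 + (M_1 − M_2)^⊥ = M_1 ∩ M_2 + (M_1')^⊥ ∩ (M_2')^⊥. -/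
/-!
Fix a point `c ∈ M₁ ∩ M₂`. Each reflector `R_{Mᵢ}` preserves distances to `c`, because
`x - P x ⊥ P x - c`; hence `T_{M₁,M₂}` and `T_{M₂,M₁}` are averages `½(I + S)` of maps `S`
preserving distances to `c`. By strict convexity of `H`, such an average strictly decreases
the distance to `c` at every point not fixed by `S`, so a fixed point of the composition
`T_{M₂,M₁} T_{M₁,M₂}` must be fixed by both factors.

A point `x` is fixed by `R₂ R₁` exactly when `P₁ x ∈ M₂` and `x - P₁ x ⊥ M₁', M₂'`, which gives
`Fix T_{M₁,M₂} = M₁ ∩ M₂ + (M₁')^⊥ ∩ (M₂')^⊥`; and `(M₁ - M₂)^⊥ = (M₁')^⊥ ∩ (M₂')^⊥` because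
`M₁ - M₂ = (c + M₁') - (c + M₂') = M₁' + M₂'`.
-/

open Pointwise RealInnerProductSpace

/-- The orthogonal complement of a subset of `H`. -/
def setOrth {H : Type*} [NormedAddCommGroup H] [InnerProductSpace ℝ H]
    (S : Set H) : Set H :=
  {x | ∀ y ∈ S, ⟪x, y⟫ = 0}

section Averaged

variable {E : Type*} [AddCommGroup E] [Module ℝ E]

noncomputable def reflector (P : E → E) (x : E) : E := (2 : ℝ) • P x - x

-- `T_{C₁,C₂} = averaged (reflector P₂ ∘ reflector P₁)`
noncomputable def averaged (S : E → E) (x : E) : E := ((1 : ℝ) / 2) • (x + S x)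

theorem averaged_eq_self_iff {S : E → E} {x : E} : averaged S x = x ↔ S x = x := by
  rw [averaged, ← sub_eq_zero, show ((1 : ℝ) / 2) • (x + S x) - x = ((1 : ℝ) / 2) • (S x - x) by
    module, smul_eq_zero, sub_eq_zero]
  norm_num

end Averaged

section StrictConvex

variable {E : Type*} [NormedAddCommGroup E] [NormedSpace ℝ E] [StrictConvexSpace ℝ E]
  {S S' : E → E} {c x : E}

theorem norm_averaged_sub_lt_iff (hS : ‖S x - c‖ = ‖x - c‖) :
    ‖averaged S x - c‖ < ‖x - c‖ ↔ S x ≠ x := by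
  rw [show averaged S x - c = (1 / 2 : ℝ) • ((x - c) + (S x - c)) by rw [averaged]; module,
    norm_midpoint_lt_iff hS.symm, ne_eq, ne_eq, sub_left_inj, eq_comm]

theorem norm_averaged_sub_le (hS : ‖S x - c‖ = ‖x - c‖) : ‖averaged S x - c‖ ≤ ‖x - c‖ := by
  by_cases h : S x = x
  · rw [averaged_eq_self_iff.2 h]
  · exact ((norm_averaged_sub_lt_iff hS).2 h).le

theorem averaged_eq_self_of_averaged_comp_eq_self
    (hS : ∀ y, ‖S y - c‖ = ‖y - c‖) (hS' : ∀ y, ‖S' y - c‖ = ‖y - c‖)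
    (hx : averaged S' (averaged S x) = x) : averaged S x = x := by
  rw [averaged_eq_self_iff]
  by_contra hSx
  have hle := norm_averaged_sub_le (hS' (averaged S x))
  rw [hx] at hle
  exact hle.not_gt ((norm_averaged_sub_lt_iff (hS x)).2 hSx)

theorem fixedPoints_averaged_comp
    (hS : ∀ y, ‖S y - c‖ = ‖y - c‖) (hS' : ∀ y, ‖S' y - c‖ = ‖y - c‖) :
    {x | averaged S' (averaged S x) = x} = {x | averaged S x = x} ∩ {x | averaged S' x = x} := by
  ext x
  constructor
  · intro hx
    have hSx : averaged S x = x := averaged_eq_self_of_averaged_comp_eq_self hS hS' hx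
    exact ⟨hSx, by rwa [Set.mem_ofPred_eq, hSx] at hx⟩
  · rintro ⟨hSx, hS'x⟩
    rw [Set.mem_ofPred_eq, hSx, hS'x]

end StrictConvex

section Projector

variable {H : Type*} [NormedAddCommGroup H] [InnerProductSpace ℝ H]
  {M M1 M2 : AffineSubspace ℝ H} {P P1 P2 : H → H}

theorem IsProjOn.norm_sub_eq_iInf (hP : IsProjOn (M : Set H) P) (x : H) :
    ‖x - P x‖ = ⨅ w : (M : Set H), ‖x - w‖ := by
  have : Nonempty (M : Set H) := ⟨⟨P x, (hP x).1⟩⟩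
  refine le_antisymm (le_ciInf fun w => (hP x).2 w w.2) ?_
  exact ciInf_le ⟨0, Set.forall_mem_range.2 fun w => norm_nonneg _⟩
    (⟨P x, (hP x).1⟩ : (M : Set H))

theorem IsProjOn.sub_mem_orthogonal (hP : IsProjOn (M : Set H) P) (x : H) :
    x - P x ∈ M.directionᗮ := by
  have hvar := (norm_eq_iInf_iff_real_inner_le_zero M.convex (hP x).1).1 (hP.norm_sub_eq_iInf x)
  rw [Submodule.mem_orthogonal']
  intro u hu
  have hmem (t : ℝ) : t • u + P x ∈ M :=
    AffineSubspace.vadd_mem_of_mem_direction (M.direction.smul_mem t hu) (hP x).1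
  have h1 := hvar _ (hmem 1)
  have h2 := hvar _ (hmem (-1))
  simp only [add_sub_cancel_right, one_smul, neg_smul, inner_neg_right] at h1 h2
  linarith

theorem IsProjOn.apply_eq_iff (hP : IsProjOn (M : Set H) P) {x q : H} (hq : q ∈ M) :
    P x = q ↔ x - q ∈ M.directionᗮ := by
  refine ⟨fun h => h ▸ hP.sub_mem_orthogonal x, fun hx => ?_⟩
  have hdir : P x - q ∈ M.direction := AffineSubspace.vsub_mem_direction (hP x).1 hq
  have horth : P x - q ∈ M.directionᗮ := by
    simpa using Submodule.sub_mem _ hx (hP.sub_mem_orthogonal x)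
  have : P x - q ∈ M.direction ⊓ M.directionᗮ := ⟨hdir, horth⟩
  rwa [Submodule.inf_orthogonal_eq_bot, Submodule.mem_bot, sub_eq_zero] at this

theorem IsProjOn.reflector_add_of_mem_orthogonal (hP : IsProjOn (M : Set H) P) {m w : H}
    (hm : m ∈ M) (hw : w ∈ M.directionᗮ) : reflector P (m + w) = m - w := by
  rw [reflector, (hP.apply_eq_iff hm).2 (by simpa using hw)]
  module

theorem IsProjOn.norm_reflector_sub (hP : IsProjOn (M : Set H) P) {c : H} (hc : c ∈ M)
    (x : H) : ‖reflector P x - c‖ = ‖x - c‖ :=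
  have horth : ⟪x - P x, P x - c⟫ = 0 := Submodule.inner_left_of_mem_orthogonal
    (AffineSubspace.vsub_mem_direction (hP x).1 hc) (hP.sub_mem_orthogonal x)
  calc ‖reflector P x - c‖ = ‖(P x - c) - (x - P x)‖ := by rw [reflector]; congr 1; module
    _ = ‖(P x - c) + (x - P x)‖ := norm_sub_eq_norm_add horth
    _ = ‖x - c‖ := by rw [sub_add_sub_cancel']

theorem reflector_comp_eq_self_iff (hP1 : IsProjOn (M1 : Set H) P1)
    (hP2 : IsProjOn (M2 : Set H) P2) {x : H} :
    reflector P2 (reflector P1 x) = x ↔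
      x ∈ ((M1 : Set H) ∩ M2) + ((M1.directionᗮ : Set H) ∩ M2.directionᗮ) := by
  constructor
  · intro hx
    set y := reflector P1 x with hy
    rw [reflector] at hx hy
    have hP2y : P2 y = P1 x := by
      apply smul_right_injective H (two_ne_zero' ℝ)
      linear_combination (norm := module) hx + hy
    have hm2 : P1 x ∈ M2 := hP2y ▸ (hP2 y).1
    have hw2 : x - P1 x ∈ M2.directionᗮ := by
      rw [show x - P1 x = -(y - P1 x) by rw [hy]; module]
      exact Submodule.neg_mem _ ((hP2.apply_eq_iff hm2).1 hP2y)
    exact ⟨P1 x, ⟨(hP1 x).1, hm2⟩, x - P1 x, ⟨hP1.sub_mem_orthogonal x, hw2⟩,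
      add_sub_cancel _ _⟩
  · rintro ⟨m, ⟨hm1, hm2⟩, w, ⟨hw1, hw2⟩, rfl⟩
    rw [hP1.reflector_add_of_mem_orthogonal hm1 hw1, sub_eq_add_neg,
      hP2.reflector_add_of_mem_orthogonal hm2 (Submodule.neg_mem _ hw2), sub_neg_eq_add]

theorem setOrth_sub_eq_inter_orthogonal {c : H} (hc1 : c ∈ M1) (hc2 : c ∈ M2) :
    setOrth ((M1 : Set H) - (M2 : Set H)) = (M1.directionᗮ : Set H) ∩ M2.directionᗮ := by
  ext w
  simp only [setOrth, Set.mem_ofPred_eq, Set.mem_inter_iff, SetLike.mem_coe,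
    Submodule.mem_orthogonal']
  constructor
  · intro h
    refine ⟨fun u hu => ?_, fun v hv => ?_⟩
    · simpa using h _ (Set.sub_mem_sub (AffineSubspace.vadd_mem_of_mem_direction hu hc1) hc2)
    · simpa using h _ (Set.sub_mem_sub hc1 (AffineSubspace.vadd_mem_of_mem_direction hv hc2))
  · rintro ⟨h1, h2⟩ _ ⟨p, hp, q, hq, rfl⟩
    show ⟪w, p - q⟫ = 0
    rw [← sub_sub_sub_cancel_right p q c, inner_sub_right,
      h1 (p - c) (AffineSubspace.vsub_mem_direction hp hc1),
      h2 (q - c) (AffineSubspace.vsub_mem_direction hq hc2), sub_zero]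

end Projector

theorem symmetric_dr_fixed_points_general
    {H : Type*} [NormedAddCommGroup H] [InnerProductSpace ℝ H]
    (M1 M2 : AffineSubspace ℝ H)
    (hne : ((M1 : Set H) ∩ (M2 : Set H)).Nonempty)
    (P1 P2 : H → H)
    (hP1 : IsProjOn (M1 : Set H) P1) (hP2 : IsProjOn (M2 : Set H) P2)
    (R1 R2 : H → H)
    (hR1 : ∀ x, R1 x = (2 : ℝ) • P1 x - x) (hR2 : ∀ x, R2 x = (2 : ℝ) • P2 x - x)
    (T12 T21 : H → H)
    (hT12 : ∀ x, T12 x = ((1 : ℝ) / 2) • (x + R2 (R1 x)))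
    (hT21 : ∀ x, T21 x = ((1 : ℝ) / 2) • (x + R1 (R2 x))) :
    {y : H | T21 (T12 y) = y} = {y : H | T12 y = y} ∩ {y : H | T21 y = y} ∧
    {y : H | T21 (T12 y) = y}
      = ((M1 : Set H) ∩ (M2 : Set H)) + setOrth ((M1 : Set H) - (M2 : Set H)) ∧
    {y : H | T21 (T12 y) = y}
      = ((M1 : Set H) ∩ (M2 : Set H))
        + ((M1.directionᗮ : Set H) ∩ (M2.directionᗮ : Set H)) := by
  obtain ⟨c, hc1, hc2⟩ := hne
  obtain rfl : R1 = reflector P1 := funext hR1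
  obtain rfl : R2 = reflector P2 := funext hR2
  obtain rfl : T12 = averaged (reflector P2 ∘ reflector P1) := funext hT12
  obtain rfl : T21 = averaged (reflector P1 ∘ reflector P2) := funext hT21
  have hfix12 : {y | averaged (reflector P2 ∘ reflector P1) y = y}
      = ((M1 : Set H) ∩ M2) + ((M1.directionᗮ : Set H) ∩ M2.directionᗮ) :=
    Set.ext fun y => averaged_eq_self_iff.trans (reflector_comp_eq_self_iff hP1 hP2)
  have hfix21 : {y | averaged (reflector P1 ∘ reflector P2) y = y}
      = ((M1 : Set H) ∩ M2) + ((M1.directionᗮ : Set H) ∩ M2.directionᗮ) := by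
    rw [Set.inter_comm (M1 : Set H), Set.inter_comm (M1.directionᗮ : Set H)]
    exact Set.ext fun y => averaged_eq_self_iff.trans (reflector_comp_eq_self_iff hP2 hP1)
  have hcomp := fixedPoints_averaged_comp
    (S := reflector P2 ∘ reflector P1) (S' := reflector P1 ∘ reflector P2)
    (fun y => (hP2.norm_reflector_sub hc2 _).trans (hP1.norm_reflector_sub hc1 y))
    (fun y => (hP1.norm_reflector_sub hc1 _).trans (hP2.norm_reflector_sub hc2 y))
  rw [hcomp, hfix12, hfix21, Set.inter_self, setOrth_sub_eq_inter_orthogonal hc1 hc2]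
  exact ⟨rfl, rfl, rfl⟩

/-- Fixed point set of the symmetrised Douglas–Rachford operator
`T = T_{M₂,M₁} T_{M₁,M₂}` for closed affine subspaces with nonempty intersection:
`Fix T = Fix T_{M₁,M₂} ∩ Fix T_{M₂,M₁} = M₁ ∩ M₂ + (M₁ − M₂)^⊥
      = M₁ ∩ M₂ + (M₁')^⊥ ∩ (M₂')^⊥`. -/
theorem symmetric_dr_fixed_points
    {H : Type*} [NormedAddCommGroup H] [InnerProductSpace ℝ H] [CompleteSpace H]
    (M1 M2 : AffineSubspace ℝ H)
    (hM1 : IsClosed (M1 : Set H)) (hM2 : IsClosed (M2 : Set H))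
    (hne : ((M1 : Set H) ∩ (M2 : Set H)).Nonempty)
    (P1 P2 : H → H)
    (hP1 : IsProjOn (M1 : Set H) P1) (hP2 : IsProjOn (M2 : Set H) P2)
    (R1 R2 : H → H)
    (hR1 : ∀ x, R1 x = (2 : ℝ) • P1 x - x) (hR2 : ∀ x, R2 x = (2 : ℝ) • P2 x - x)
    (T12 T21 : H → H)
    (hT12 : ∀ x, T12 x = ((1 : ℝ) / 2) • (x + R2 (R1 x)))
    (hT21 : ∀ x, T21 x = ((1 : ℝ) / 2) • (x + R1 (R2 x))) :
    {y : H | T21 (T12 y) = y} = {y : H | T12 y = y} ∩ {y : H | T21 y = y} ∧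
    {y : H | T21 (T12 y) = y}
      = ((M1 : Set H) ∩ (M2 : Set H)) + setOrth ((M1 : Set H) - (M2 : Set H)) ∧
    {y : H | T21 (T12 y) = y}
      = ((M1 : Set H) ∩ (M2 : Set H))
        + ((M1.directionᗮ : Set H) ∩ (M2.directionᗮ : Set H)) :=
  symmetric_dr_fixed_points_general M1 M2 hne P1 P2 hP1 hP2 R1 R2 hR1 hR2 T12 T21 hT12 hT21
end

section
/- Let M_1, M_2 be closed affine subspaces of a real Hilbert space H with M := M_1 ∩ M_2 nonempty, and let T := T_{M_2,M_1} T_{M_1,M_2}, where T_{C_1,C_2} := (1/2)(I + R_{C_2} R_{C_1}). Given x_0 ∈ H, set z_0 := T(x_0) and z_{k+1} := z_k + t_k (T(z_k) − z_k), where t_k := 1/2 + (‖z_k − T_{M_1,M_2}(z_k)‖² + ‖T_{M_1,M_2}(z_k) − T(z_k)‖²)/(2‖z_k − T(z_k)‖²) if T(z_k) ≠ z_k and t_k := 1 otherwise. Then for every k ∈ ℕ, ‖z_k − P_{Fix T}(x_0)‖ ≤ ‖T^{k+1}(x_0) − P_{Fix T}(x_0)‖, and moreover max{‖P_{M_1}(z_k)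 − P_M(x_0)‖, ‖P_{M_2}(z_k) − P_M(x_0)‖} ≤ ‖z_k − P_{Fix T}(x_0)‖. -/
open RealInnerProductSpace

section

variable {H : Type*} [NormedAddCommGroup H] [InnerProductSpace ℝ H]

-- Testing `ε = ⟪v, s⟫ / (‖s‖² + 1)` avoids a case split on `s = 0`.
theorem inner_eq_zero_of_forall_norm_le_norm_sub_smul {v s : H}
    (h : ∀ ε : ℝ, ‖v‖ ≤ ‖v - ε • s‖) : ⟪v, s⟫ = 0 := by
  set a := ⟪v, s⟫
  have hN : 0 < ‖s‖ ^ 2 + 1 := by positivity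
  have hε := pow_le_pow_left₀ (norm_nonneg _) (h (a / (‖s‖ ^ 2 + 1))) 2
  rw [norm_sub_sq_real, real_inner_smul_right, norm_smul, mul_pow, Real.norm_eq_abs, sq_abs] at hε
  have ha : a ^ 2 * (‖s‖ ^ 2 + 2) ≤ 0 := by
    field_simp at hε
    nlinarith
  nlinarith [sq_nonneg a, sq_nonneg ‖s‖]

namespace IsProjOn

theorem inner_sub_eq_zero_s19 {S : Set H} {P : H → H} (hP : IsProjOn S P) {x s : H}
    (hs : ∀ ε : ℝ, P x + ε • s ∈ S) : ⟪x - P x, s⟫ = 0 :=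
  inner_eq_zero_of_forall_norm_le_norm_sub_smul fun ε => by
    simpa only [sub_sub] using (hP x).2 _ (hs ε)

variable {M : AffineSubspace ℝ H} {P : H → H}

theorem inner_sub_eq_zero_of_mem_direction (hP : IsProjOn (M : Set H) P) (x : H) {s : H}
    (hs : s ∈ M.direction) : ⟪x - P x, s⟫ = 0 :=
  hP.inner_sub_eq_zero_s19 fun ε => by
    simpa only [vadd_eq_add, add_comm, SetLike.mem_coe] using
      AffineSubspace.vadd_mem_of_mem_direction (M.direction.smul_mem ε hs) (hP x).1

theorem hasOrthogonalProjection (hP : IsProjOn (M : Set H) P) :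
    M.direction.HasOrthogonalProjection where
  exists_orthogonal v := by
    refine ⟨P v - P 0, AffineSubspace.vsub_mem_direction (hP v).1 (hP 0).1, ?_⟩
    rw [Submodule.mem_orthogonal']
    intro w hw
    rw [show v - (P v - P 0) = (v - P v) - (0 - P 0) by abel, inner_sub_left,
      hP.inner_sub_eq_zero_of_mem_direction v hw, hP.inner_sub_eq_zero_of_mem_direction 0 hw,
      sub_zero]

variable [M.direction.HasOrthogonalProjection]

theorem eq_add_starProjection_s19 (hP : IsProjOn (M : Set H) P) {c : H} (hc : c ∈ M) (x : H) :
    P x = c + M.direction.starProjection (x - c) := by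
  rw [M.direction.eq_starProjection_of_mem_of_inner_eq_zero
    (AffineSubspace.vsub_mem_direction (hP x).1 hc) fun w hw => ?_]
  · simp only [vsub_eq_sub, add_sub_cancel]
  · rw [vsub_eq_sub, sub_sub_sub_cancel_right]
    exact hP.inner_sub_eq_zero_of_mem_direction x hw

theorem two_smul_sub_eq_add_reflection (hP : IsProjOn (M : Set H) P) {c : H} (hc : c ∈ M)
    (x : H) : (2 : ℝ) • P x - x = c + M.direction.reflection (x - c) := by
  rw [Submodule.reflection_apply, hP.eq_add_starProjection_s19 hc]
  module

theorem norm_sub_le_of_starProjection_sub_eq_zero (hP : IsProjOn (M : Set H) P) {f g : H}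
    (hg : g ∈ M) (hfg : M.direction.starProjection (f - g) = 0) (z : H) :
    ‖P z - g‖ ≤ ‖z - f‖ := by
  have hz : M.direction.starProjection (z - g) = M.direction.starProjection (z - f) := by
    rw [← sub_add_sub_cancel z f g, map_add, hfg, add_zero]
  rw [hP.eq_add_starProjection_s19 hg, add_sub_cancel_left, hz]
  exact M.direction.norm_starProjection_apply_le _

end IsProjOn

section DouglasRachford

variable (C : H ≃ₗᵢ[ℝ] H)

/-- For `C = R₁.trans R₂` this is the linear part of `T_{C₁,C₂} = (I + R₂ R₁) / 2`. -/
noncomputable def drOperator : H →ₗ[ℝ] H :=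
  ((1 : ℝ) / 2) • (LinearMap.id + C.toLinearEquiv.toLinearMap)

noncomputable def symmetricDROperator : H →ₗ[ℝ] H := drOperator C.symm * drOperator C

variable {C}

@[simp]
theorem drOperator_apply (v : H) : drOperator C v = ((1 : ℝ) / 2) • (v + C v) := rfl

theorem symmetricDROperator_apply (v : H) :
    symmetricDROperator C v = drOperator C.symm (drOperator C v) := rfl

theorem inner_drOperator_symm_apply (u v : H) :
    ⟪drOperator C.symm u, v⟫ = ⟪u, drOperator C v⟫ := by
  simp only [drOperator_apply, inner_smul_left, inner_smul_right, inner_add_left,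
    inner_add_right, C.symm.inner_map_eq_flip, LinearIsometryEquiv.symm_symm]
  simp

theorem inner_drOperator_apply_self (v : H) : ⟪v, drOperator C v⟫ = ‖drOperator C v‖ ^ 2 := by
  rw [drOperator_apply, norm_smul, mul_pow, norm_add_sq_real, real_inner_smul_right,
    inner_add_right, real_inner_self_eq_norm_sq, C.norm_map]
  norm_num
  ring

theorem norm_drOperator_apply_le (v : H) : ‖drOperator C v‖ ≤ ‖v‖ := by
  rw [drOperator_apply, norm_smul]
  have htri := norm_add_le v (C v)
  rw [C.norm_map] at htri
  norm_num
  linarith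

theorem norm_sub_drOperator_apply_sq (v : H) :
    ‖v - drOperator C v‖ ^ 2 = ‖v‖ ^ 2 - ‖drOperator C v‖ ^ 2 := by
  rw [norm_sub_sq_real, inner_drOperator_apply_self]
  ring

theorem drOperator_apply_eq_self_iff {v : H} : drOperator C v = v ↔ C v = v := by
  rw [drOperator_apply]
  constructor <;> intro h
  · calc C v = (2 : ℝ) • (((1 : ℝ) / 2) • (v + C v)) - v := by module
      _ = v := by rw [h]; module
  · rw [h]; module

theorem inner_symmetricDROperator_apply (u v : H) :
    ⟪symmetricDROperator C u, v⟫ = ⟪drOperator C u, drOperator C v⟫ :=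
  inner_drOperator_symm_apply _ _

theorem isSymmetric_symmetricDROperator : (symmetricDROperator C).IsSymmetric := fun u v => by
  rw [inner_symmetricDROperator_apply, real_inner_comm, ← inner_symmetricDROperator_apply,
    real_inner_comm]

theorem norm_symmetricDROperator_apply_sq_le (v : H) :
    ‖symmetricDROperator C v‖ ^ 2 ≤ ⟪v, symmetricDROperator C v⟫ := by
  rw [real_inner_comm, inner_symmetricDROperator_apply, real_inner_self_eq_norm_sq,
    symmetricDROperator_apply]
  gcongr
  exact norm_drOperator_apply_le _

theorem symmetricDROperator_apply_eq_self_iff {v : H} :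
    symmetricDROperator C v = v ↔ C v = v := by
  rw [← drOperator_apply_eq_self_iff, symmetricDROperator_apply]
  constructor <;> intro h
  · refine eq_of_norm_le_re_inner_eq_norm_sq (𝕜 := ℝ) (norm_drOperator_apply_le v) ?_
    rw [RCLike.re_to_real]
    nth_rewrite 2 [← h]
    rw [inner_drOperator_apply_self, h]
  · rw [h, drOperator_apply_eq_self_iff, LinearIsometryEquiv.symm_apply_eq, eq_comm,
      ← drOperator_apply_eq_self_iff, h]

theorem two_inner_sub_symmetricDROperator_apply (v : H) :
    2 * ⟪v, v - symmetricDROperator C v⟫ = ‖v - symmetricDROperator C v‖ ^ 2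
      + ‖v - drOperator C v‖ ^ 2 + ‖drOperator C v - symmetricDROperator C v‖ ^ 2 := by
  rw [norm_sub_drOperator_apply_sq, symmetricDROperator_apply, norm_sub_drOperator_apply_sq,
    ← symmetricDROperator_apply, norm_sub_sq_real, inner_sub_right, real_inner_self_eq_norm_sq]
  ring

end DouglasRachford

section Moments

variable {B : H →ₗ[ℝ] H}

theorem LinearMap.IsSymmetric.inner_pow_apply_pow_apply (hB : B.IsSymmetric) (a b : ℕ)
    (x y : H) : ⟪(B ^ a) x, (B ^ b) y⟫ = ⟪x, (B ^ (a + b)) y⟫ := by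
  rw [hB.pow a, pow_add, Module.End.mul_apply]

theorem inner_apply_self_le_norm_sq_s19 (hfirm : ∀ x, ‖B x‖ ^ 2 ≤ ⟪x, B x⟫) (x : H) :
    ⟪x, B x⟫ ≤ ‖x‖ ^ 2 := by
  have hcs := real_inner_le_norm x (B x)
  have hle : ‖B x‖ ≤ ‖x‖ := by nlinarith [hfirm x, norm_nonneg (B x), norm_nonneg x]
  nlinarith [norm_nonneg x, norm_nonneg (B x)]

theorem antitone_inner_pow_apply_self (hB : B.IsSymmetric)
    (hfirm : ∀ x, ‖B x‖ ^ 2 ≤ ⟪x, B x⟫) (y : H) : Antitone fun j : ℕ => ⟪y, (B ^ j) y⟫ := by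
  have hsplit (i r : ℕ) : ⟪y, (B ^ (2 * i + r)) y⟫ = ⟪(B ^ i) y, (B ^ r) ((B ^ i) y)⟫ := by
    rw [← Module.End.mul_apply, ← pow_add, hB.inner_pow_apply_pow_apply,
      show i + (r + i) = 2 * i + r by ring]
  refine antitone_nat_of_succ_le fun j => ?_
  obtain ⟨i, rfl | rfl⟩ := Nat.even_or_odd' j
  · rw [hsplit i 1, ← add_zero (2 * i), hsplit i 0, pow_one, pow_zero, Module.End.one_apply,
      real_inner_self_eq_norm_sq]
    exact inner_apply_self_le_norm_sq_s19 hfirm _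
  · rw [add_assoc, hsplit i 2, hsplit i 1, pow_two, Module.End.mul_apply, ← hB, pow_one,
      real_inner_self_eq_norm_sq]
    exact hfirm _

theorem LinearMap.IsSymmetric.inner_apply_pow_apply_apply (hB : B.IsSymmetric) (u : H) (j : ℕ) :
    ⟪B u, (B ^ j) (B u)⟫ = ⟪u, (B ^ (j + 2)) u⟫ := by
  rw [hB, ← Module.End.mul_apply, ← Module.End.mul_apply, ← pow_succ', ← pow_succ]

theorem LinearMap.IsSymmetric.inner_smul_add_smul_apply_pow (hB : B.IsSymmetric) (u : H)
    (a b : ℝ) (j : ℕ) :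
    ⟪a • u + b • B u, (B ^ j) (a • u + b • B u)⟫ = a ^ 2 * ⟪u, (B ^ j) u⟫
      + 2 * (a * b) * ⟪u, (B ^ (j + 1)) u⟫ + b ^ 2 * ⟪u, (B ^ (j + 2)) u⟫ := by
  have h1 : ⟪B u, (B ^ j) u⟫ = ⟪u, (B ^ (j + 1)) u⟫ := by
    rw [hB, ← Module.End.mul_apply, ← pow_succ']
  have h2 : ⟪u, (B ^ j) (B u)⟫ = ⟪u, (B ^ (j + 1)) u⟫ := by
    rw [← Module.End.mul_apply, ← pow_succ]
  simp only [map_add, map_smul, inner_add_left, inner_add_right, real_inner_smul_left,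
    real_inner_smul_right, h1, h2, hB.inner_apply_pow_apply_apply]
  ring

/-- Read spectrally, with `m j = ∫ λʲ`, this is `∫ λʲ ((1 - t + t λ)² - λ²) ≤ 0`. It holds at
`j = 0` by the choice of `t`, and the recursion `hrec` propagates it, `e` being the moment
sequence of `(1 - t) u + (t + 1) B u`. -/
theorem moment_step_le (m : ℕ → ℝ) {t : ℝ} (ht : 1 ≤ t)
    (h0 : t * (m 0 - 2 * m 1 + m 2) = m 0 - m 1) (hD : 0 ≤ m 0 - 2 * m 1 + m 2)
    (he : Antitone fun j => (1 - t) ^ 2 * m j + 2 * ((1 - t) * (t + 1)) * m (j + 1)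
      + (t + 1) ^ 2 * m (j + 2)) (j : ℕ) :
    (1 - t) ^ 2 * m j + 2 * ((1 - t) * t) * m (j + 1) + t ^ 2 * m (j + 2) ≤ m (j + 2) := by
  let e (j : ℕ) := (1 - t) ^ 2 * m j + 2 * ((1 - t) * (t + 1)) * m (j + 1)
    + (t + 1) ^ 2 * m (j + 2)
  let c (j : ℕ) := (1 - t) ^ 2 * m j + 2 * ((1 - t) * t) * m (j + 1) + t ^ 2 * m (j + 2)
    - m (j + 2)
  have hrec (j : ℕ) : (t + 1) ^ 2 * c (j + 1) = (t ^ 2 - 1) * (c j - (e j - e (j + 1))) := by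
    simp only [c, e]
    ring
  suffices hc : c j ≤ 0 from sub_nonpos.1 hc
  induction j with
  | zero =>
    have hc0 : c 0 = -((t - 1) ^ 2 * (m 0 - 2 * m 1 + m 2)) := by
      simp only [c]
      linear_combination (2 * (t - 1)) * h0
    rw [hc0]
    exact neg_nonpos.2 (mul_nonneg (sq_nonneg _) hD)
  | succ j ih =>
    have hee : e (j + 1) ≤ e j := he (Nat.le_succ j)
    have hmul : (t + 1) ^ 2 * c (j + 1) ≤ 0 := by
      rw [hrec]
      exact mul_nonpos_of_nonneg_of_nonpos (by nlinarith) (by linarith)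
    exact nonpos_of_mul_nonpos_right hmul (by positivity)

def MomentLE (B : H →ₗ[ℝ] H) (u v : H) : Prop :=
  ∀ j : ℕ, ⟪u, (B ^ j) u⟫ ≤ ⟪v, (B ^ j) v⟫

namespace MomentLE

variable {u v w : H}

theorem trans (huv : MomentLE B u v) (hvw : MomentLE B v w) : MomentLE B u w :=
  fun j => (huv j).trans (hvw j)

theorem map (hB : B.IsSymmetric) (huv : MomentLE B u v) : MomentLE B (B u) (B v) := fun j => by
  simpa only [hB.inner_apply_pow_apply_apply] using huv (j + 2)

theorem norm_le (huv : MomentLE B u v) : ‖u‖ ≤ ‖v‖ := by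
  have h := huv 0
  simp only [pow_zero, Module.End.one_apply, real_inner_self_eq_norm_sq] at h
  exact (pow_le_pow_iff_left₀ (norm_nonneg _) (norm_nonneg _) two_ne_zero).1 h

end MomentLE

theorem momentLE_sub_smul_sub_apply (hB : B.IsSymmetric) (hfirm : ∀ x, ‖B x‖ ^ 2 ≤ ⟪x, B x⟫)
    {u : H} {t : ℝ} (ht : t * ‖u - B u‖ ^ 2 = ⟪u, u - B u⟫) :
    MomentLE B (u - t • (u - B u)) (B u) := by
  by_cases hu : B u = u
  · intro j
    rw [hu, sub_self, smul_zero, sub_zero]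
  obtain ⟨m, hm⟩ : ∃ m : ℕ → ℝ, ∀ j, m j = ⟪u, (B ^ j) u⟫ := ⟨_, fun _ => rfl⟩
  have hm0 : ‖u‖ ^ 2 = m 0 := by
    rw [hm, pow_zero, Module.End.one_apply, real_inner_self_eq_norm_sq]
  have hm1 : ⟪u, B u⟫ = m 1 := by rw [hm, pow_one]
  have hm2 : ‖B u‖ ^ 2 = m 2 := by
    rw [hm, ← real_inner_self_eq_norm_sq, hB, ← Module.End.mul_apply, ← pow_two]
  have hD : ‖u - B u‖ ^ 2 = m 0 - 2 * m 1 + m 2 := by rw [norm_sub_sq_real, hm0, hm1, hm2]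
  have hI : ⟪u, u - B u⟫ = m 0 - m 1 := by
    rw [inner_sub_right, real_inner_self_eq_norm_sq, hm0, hm1]
  have hD_pos : 0 < m 0 - 2 * m 1 + m 2 := by
    rw [← hD]
    exact pow_pos (norm_pos_iff.2 (sub_ne_zero.2 (Ne.symm hu))) 2
  have hm21 : m 2 ≤ m 1 := by simpa only [hm1, hm2] using hfirm u
  rw [hD, hI] at ht
  have ht1 : 1 ≤ t := by nlinarith
  have he := antitone_inner_pow_apply_self hB hfirm ((1 - t) • u + (t + 1) • B u)
  simp only [hB.inner_smul_add_smul_apply_pow, ← hm] at he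
  intro j
  calc ⟪u - t • (u - B u), (B ^ j) (u - t • (u - B u))⟫
      = (1 - t) ^ 2 * m j + 2 * ((1 - t) * t) * m (j + 1) + t ^ 2 * m (j + 2) := by
        rw [show u - t • (u - B u) = (1 - t) • u + t • B u by module,
          hB.inner_smul_add_smul_apply_pow, hm, hm, hm]
    _ ≤ m (j + 2) := moment_step_le m ht1 ht hD_pos.le he j
    _ = ⟪B u, (B ^ j) (B u)⟫ := by rw [hm, hB.inner_apply_pow_apply_apply]

theorem norm_sub_le_norm_iterate_sub (hB : B.IsSymmetric)
    (hfirm : ∀ x, ‖B x‖ ^ 2 ≤ ⟪x, B x⟫) {T : H → H} {f : H} (hT : ∀ x, T x = f + B (x - f))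
    (x0 : H) {z : ℕ → H} {t : ℕ → ℝ} (hz0 : z 0 = T x0)
    (hz : ∀ k, z (k + 1) = z k + t k • (T (z k) - z k))
    (ht : ∀ k, t k * ‖z k - T (z k)‖ ^ 2 = ⟪z k - f, z k - T (z k)⟫) (k : ℕ) :
    ‖z k - f‖ ≤ ‖T^[k + 1] x0 - f‖ := by
  have hiter (n : ℕ) : T^[n] x0 - f = (B ^ n) (x0 - f) := by
    induction n with
    | zero => simp
    | succ n ih =>
      rw [Function.iterate_succ_apply', hT, add_sub_cancel_left, ih, pow_succ',
        Module.End.mul_apply]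
  have hres (k : ℕ) : z k - T (z k) = (z k - f) - B (z k - f) := by rw [hT]; abel
  suffices h : MomentLE B (z k - f) ((B ^ (k + 1)) (x0 - f)) by
    rw [hiter]; exact h.norm_le
  induction k with
  | zero => intro j; rw [hz0, hT, add_sub_cancel_left, pow_one]
  | succ k ih =>
    have hstep : z (k + 1) - f = (z k - f) - t k • ((z k - f) - B (z k - f)) := by
      rw [hz, hT]; module
    rw [hstep, pow_succ', Module.End.mul_apply]
    exact (momentLE_sub_smul_sub_apply hB hfirm (by rw [← hres]; exact ht k)).trans (ih.map hB)

end Moments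

section Reflections

variable {K₁ K₂ : Submodule ℝ H} [K₁.HasOrthogonalProjection] [K₂.HasOrthogonalProjection]

theorem reflection_trans_reflection_apply_eq_self_iff {h : H} :
    (K₁.reflection.trans K₂.reflection) h = h ↔ K₁.starProjection h = K₂.starProjection h := by
  rw [LinearIsometryEquiv.trans_apply, ← LinearIsometryEquiv.eq_symm_apply,
    Submodule.reflection_symm, Submodule.reflection_apply, Submodule.reflection_apply,
    sub_left_inj, ← Nat.cast_smul_eq_nsmul ℝ, ← Nat.cast_smul_eq_nsmul ℝ]
  exact (smul_right_injective H (by norm_num : ((2 : ℕ) : ℝ) ≠ 0)).eq_iff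

theorem reflection_trans_reflection_apply_eq_self_of_mem_inf {h : H} (hh : h ∈ K₁ ⊓ K₂) :
    (K₁.reflection.trans K₂.reflection) h = h := by
  rw [reflection_trans_reflection_apply_eq_self_iff, K₁.starProjection_eq_self_iff.2 hh.1,
    K₂.starProjection_eq_self_iff.2 hh.2]

theorem starProjection_sub_eq_zero_of_inner_eq_zero {x f g : H}
    (hfg : (K₁.reflection.trans K₂.reflection) (f - g) = f - g)
    (hf : ∀ s, (K₁.reflection.trans K₂.reflection) s = s → ⟪x - f, s⟫ = 0)
    (hg : ∀ s ∈ K₁ ⊓ K₂, ⟪x - g, s⟫ = 0) :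
    K₁.starProjection (f - g) = 0 ∧ K₂.starProjection (f - g) = 0 := by
  have h12 := reflection_trans_reflection_apply_eq_self_iff.1 hfg
  set s := K₁.starProjection (f - g)
  have hs : s ∈ K₁ ⊓ K₂ :=
    ⟨K₁.starProjection_apply_mem _, h12 ▸ K₂.starProjection_apply_mem _⟩
  have hperp : ⟪f - g, s⟫ = 0 := by
    rw [← sub_sub_sub_cancel_left g f x, inner_sub_left, hg s hs,
      hf s (reflection_trans_reflection_apply_eq_self_of_mem_inf hs), sub_zero]
  have hs0 : s = 0 := by
    have h := K₁.starProjection_inner_eq_zero (f - g) s hs.1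
    rwa [inner_sub_left, hperp, zero_sub, neg_eq_zero, inner_self_eq_zero] at h
  exact ⟨hs0, h12 ▸ hs0⟩

end Reflections

theorem eq_add_drOperator_of_eq_add {R₁ R₂ T₁₂ : H → H} {ρ₁ ρ₂ : H ≃ₗᵢ[ℝ] H} {c : H}
    (hR₁ : ∀ x, R₁ x = c + ρ₁ (x - c)) (hR₂ : ∀ x, R₂ x = c + ρ₂ (x - c))
    (hT₁₂ : ∀ x, T₁₂ x = ((1 : ℝ) / 2) • (x + R₂ (R₁ x))) (x : H) :
    T₁₂ x = c + drOperator (ρ₁.trans ρ₂) (x - c) := by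
  rw [hT₁₂, hR₁, hR₂, add_sub_cancel_left, drOperator_apply, LinearIsometryEquiv.trans_apply]
  module

theorem eq_add_apply_sub_of_apply_eq_self {T : H → H} {L : H →ₗ[ℝ] H} {c f : H}
    (hT : ∀ x, T x = c + L (x - c)) (hf : L (f - c) = f - c) (x : H) : T x = f + L (x - f) := by
  rw [hT, ← sub_add_sub_cancel x f c, map_add, hf]
  abel

theorem apply_eq_self_iff_of_eq_add {T : H → H} {L : H →ₗ[ℝ] H} {c : H}
    (hT : ∀ x, T x = c + L (x - c)) (y : H) : T y = y ↔ L (y - c) = y - c := by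
  rw [hT, ← eq_sub_iff_add_eq']

theorem eq_add_symmetricDROperator_of_eq_add {R₁ R₂ T₁₂ T₂₁ T : H → H}
    {ρ₁ ρ₂ : H ≃ₗᵢ[ℝ] H} (hρ₁ : ρ₁.symm = ρ₁) (hρ₂ : ρ₂.symm = ρ₂) {c : H}
    (hR₁ : ∀ x, R₁ x = c + ρ₁ (x - c)) (hR₂ : ∀ x, R₂ x = c + ρ₂ (x - c))
    (hT₁₂ : ∀ x, T₁₂ x = ((1 : ℝ) / 2) • (x + R₂ (R₁ x)))
    (hT₂₁ : ∀ x, T₂₁ x = ((1 : ℝ) / 2) • (x + R₁ (R₂ x))) (hT : ∀ x, T x = T₂₁ (T₁₂ x))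
    (x : H) : T x = c + symmetricDROperator (ρ₁.trans ρ₂) (x - c) := by
  rw [hT, eq_add_drOperator_of_eq_add hR₂ hR₁ hT₂₁, eq_add_drOperator_of_eq_add hR₁ hR₂ hT₁₂,
    add_sub_cancel_left, symmetricDROperator_apply, LinearIsometryEquiv.symm_trans, hρ₁, hρ₂]

theorem starProjection_projFix_sub_projInter_eq_zero {M₁ M₂ : AffineSubspace ℝ H}
    [M₁.direction.HasOrthogonalProjection] [M₂.direction.HasOrthogonalProjection] {c : H}
    (hc₁ : c ∈ M₁) (hc₂ : c ∈ M₂) {T : H → H}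
    (hT : ∀ x, T x = c + symmetricDROperator
      (M₁.direction.reflection.trans M₂.direction.reflection) (x - c))
    {PFix PM : H → H} (hPFix : IsProjOn {y | T y = y} PFix)
    (hPM : IsProjOn ((M₁ : Set H) ∩ M₂) PM) (x : H) :
    M₁.direction.starProjection (PFix x - PM x) = 0 ∧
      M₂.direction.starProjection (PFix x - PM x) = 0 := by
  have hfix (y : H) := (apply_eq_self_iff_of_eq_add hT y).trans
    symmetricDROperator_apply_eq_self_iff
  have hf := (hfix _).1 (hPFix x).1
  have hg : PM x - c ∈ M₁.direction ⊓ M₂.direction :=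
    ⟨AffineSubspace.vsub_mem_direction (hPM x).1.1 hc₁,
      AffineSubspace.vsub_mem_direction (hPM x).1.2 hc₂⟩
  have hPM' : IsProjOn ((M₁ ⊓ M₂ : AffineSubspace ℝ H) : Set H) PM := hPM
  refine starProjection_sub_eq_zero_of_inner_eq_zero (x := x) ?_ (fun s hs => ?_) fun s hs => ?_
  · rw [← sub_sub_sub_cancel_right _ _ c, map_sub, hf,
      reflection_trans_reflection_apply_eq_self_of_mem_inf hg]
  · refine hPFix.inner_sub_eq_zero_s19 fun ε => (hfix _).2 ?_
    rw [add_sub_right_comm, map_add, map_smul, hf, hs]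
  · exact hPM'.inner_sub_eq_zero_of_mem_direction x
      (by rwa [AffineSubspace.direction_inf_of_mem hc₁ hc₂])

theorem mul_norm_sub_sq_eq_inner_of_stepSize {C : H ≃ₗᵢ[ℝ] H} {T T₁₂ : H → H} {f : H}
    (hT : ∀ x, T x = f + symmetricDROperator C (x - f))
    (hT₁₂ : ∀ x, T₁₂ x = f + drOperator C (x - f)) {y : H} {t : ℝ}
    (ht : (T y ≠ y → t = 1 / 2 + (‖y - T₁₂ y‖ ^ 2 + ‖T₁₂ y - T y‖ ^ 2) / (2 * ‖y - T y‖ ^ 2)) ∧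
      (T y = y → t = 1)) :
    t * ‖y - T y‖ ^ 2 = ⟪y - f, y - T y⟫ := by
  by_cases hy : T y = y
  · rw [hy, sub_self, norm_zero, inner_zero_right]
    ring
  have hD : ‖y - T y‖ ≠ 0 := norm_ne_zero_iff.2 (sub_ne_zero.2 (Ne.symm hy))
  have hid := two_inner_sub_symmetricDROperator_apply (C := C) (y - f)
  rw [show (y - f) - symmetricDROperator C (y - f) = y - T y by rw [hT]; abel,
    show (y - f) - drOperator C (y - f) = y - T₁₂ y by rw [hT₁₂]; abel,
    show drOperator C (y - f) - symmetricDROperator C (y - f) = T₁₂ y - T y by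
      rw [hT, hT₁₂]; abel] at hid
  rw [ht.1 hy]
  field_simp
  linarith

end

theorem accelerated_symmetric_dr_general
    {H : Type*} [NormedAddCommGroup H] [InnerProductSpace ℝ H]
    (M1 M2 : AffineSubspace ℝ H)
    (hne : ((M1 : Set H) ∩ (M2 : Set H)).Nonempty)
    (P1 P2 : H → H)
    (hP1 : IsProjOn (M1 : Set H) P1) (hP2 : IsProjOn (M2 : Set H) P2)
    (R1 R2 : H → H)
    (hR1 : ∀ x, R1 x = (2 : ℝ) • P1 x - x) (hR2 : ∀ x, R2 x = (2 : ℝ) • P2 x - x)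
    (T12 T21 T : H → H)
    (hT12 : ∀ x, T12 x = ((1 : ℝ) / 2) • (x + R2 (R1 x)))
    (hT21 : ∀ x, T21 x = ((1 : ℝ) / 2) • (x + R1 (R2 x)))
    (hT : ∀ x, T x = T21 (T12 x))
    (PFix : H → H)
    (hPFix : IsProjOn {y : H | T y = y} PFix)
    (PM : H → H)
    (hPM : IsProjOn ((M1 : Set H) ∩ (M2 : Set H)) PM)
    (x0 : H) (z : ℕ → H) (t : ℕ → ℝ)
    (hz0 : z 0 = T x0)
    (ht : ∀ k, (T (z k) ≠ z k →
        t k = 1 / 2 + (‖z k - T12 (z k)‖ ^ 2 + ‖T12 (z k) - T (z k)‖ ^ 2)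
          / (2 * ‖z k - T (z k)‖ ^ 2)) ∧
      (T (z k) = z k → t k = 1))
    (hz : ∀ k, z (k + 1) = z k + t k • (T (z k) - z k)) :
    ∀ k : ℕ, ‖z k - PFix x0‖ ≤ ‖T^[k + 1] x0 - PFix x0‖ ∧
      max ‖P1 (z k) - PM x0‖ ‖P2 (z k) - PM x0‖ ≤ ‖z k - PFix x0‖ := by
  obtain ⟨c, hc₁, hc₂⟩ := hne
  have := hP1.hasOrthogonalProjection
  have := hP2.hasOrthogonalProjection
  have hR1c (x : H) := (hR1 x).trans (hP1.two_smul_sub_eq_add_reflection hc₁ x)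
  have hR2c (x : H) := (hR2 x).trans (hP2.two_smul_sub_eq_add_reflection hc₂ x)
  have hTc := eq_add_symmetricDROperator_of_eq_add Submodule.reflection_symm
    Submodule.reflection_symm hR1c hR2c hT12 hT21 hT
  have hCf := symmetricDROperator_apply_eq_self_iff.1
    ((apply_eq_self_iff_of_eq_add hTc _).1 (hPFix x0).1)
  have hTf := eq_add_apply_sub_of_apply_eq_self hTc (symmetricDROperator_apply_eq_self_iff.2 hCf)
  have hT12f := eq_add_apply_sub_of_apply_eq_self (eq_add_drOperator_of_eq_add hR1c hR2c hT12)
    (drOperator_apply_eq_self_iff.2 hCf)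
  have hfg := starProjection_projFix_sub_projInter_eq_zero hc₁ hc₂ hTc hPFix hPM x0
  exact fun k => ⟨norm_sub_le_norm_iterate_sub isSymmetric_symmetricDROperator
      norm_symmetricDROperator_apply_sq_le hTf x0 hz0 hz
      (fun k => mul_norm_sub_sq_eq_inner_of_stepSize hTf hT12f (ht k)) k,
    max_le (hP1.norm_sub_le_of_starProjection_sub_eq_zero (hPM x0).1.1 hfg.1 _)
      (hP2.norm_sub_le_of_starProjection_sub_eq_zero (hPM x0).1.2 hfg.2 _)⟩

/-- Accelerated symmetric Douglas–Rachford for affine subspaces: the accelerated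
iterates `zₖ` satisfy `‖zₖ − P_{Fix T} x₀‖ ≤ ‖T^{k+1} x₀ − P_{Fix T} x₀‖`, and
moreover `max{‖P_{M₁} zₖ − P_M x₀‖, ‖P_{M₂} zₖ − P_M x₀‖} ≤ ‖zₖ − P_{Fix T} x₀‖`. -/
theorem accelerated_symmetric_dr
    {H : Type*} [NormedAddCommGroup H] [InnerProductSpace ℝ H] [CompleteSpace H]
    (M1 M2 : AffineSubspace ℝ H)
    (hM1 : IsClosed (M1 : Set H)) (hM2 : IsClosed (M2 : Set H))
    (hne : ((M1 : Set H) ∩ (M2 : Set H)).Nonempty)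
    (P1 P2 : H → H)
    (hP1 : IsProjOn (M1 : Set H) P1) (hP2 : IsProjOn (M2 : Set H) P2)
    (R1 R2 : H → H)
    (hR1 : ∀ x, R1 x = (2 : ℝ) • P1 x - x) (hR2 : ∀ x, R2 x = (2 : ℝ) • P2 x - x)
    (T12 T21 T : H → H)
    (hT12 : ∀ x, T12 x = ((1 : ℝ) / 2) • (x + R2 (R1 x)))
    (hT21 : ∀ x, T21 x = ((1 : ℝ) / 2) • (x + R1 (R2 x)))
    (hT : ∀ x, T x = T21 (T12 x))
    (PFix : H → H)
    (hPFix : IsProjOn {y : H | T y = y} PFix)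
    (PM : H → H)
    (hPM : IsProjOn ((M1 : Set H) ∩ (M2 : Set H)) PM)
    (x0 : H) (z : ℕ → H) (t : ℕ → ℝ)
    (hz0 : z 0 = T x0)
    (ht : ∀ k, (T (z k) ≠ z k →
        t k = 1 / 2 + (‖z k - T12 (z k)‖ ^ 2 + ‖T12 (z k) - T (z k)‖ ^ 2)
          / (2 * ‖z k - T (z k)‖ ^ 2)) ∧
      (T (z k) = z k → t k = 1))
    (hz : ∀ k, z (k + 1) = z k + t k • (T (z k) - z k)) :
    ∀ k : ℕ, ‖z k - PFix x0‖ ≤ ‖T^[k + 1] x0 - PFix x0‖ ∧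
      max ‖P1 (z k) - PM x0‖ ‖P2 (z k) - PM x0‖ ≤ ‖z k - PFix x0‖ :=
  accelerated_symmetric_dr_general M1 M2 hne P1 P2 hP1 hP2 R1 R2 hR1 hR2 T12 T21 T hT12 hT21 hT PFix
    hPFix PM hPM x0 z t hz0 ht hz
end
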